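/- arXiv:0910.3544 — 11 statements merged into one kernel-verified Lean document; each statement's English description precedes it below -/
import Mathlib

section
/- Let k ≥ 4 be an integer and let G be a connected k-chordal simple graph. Then G is (⌊k/2⌋/2)-hyperbolic; that is, for all vertices x, y, u, v of G one has d(x,y) + d(u,v) ≤ max(d(x,u) + d(y,v), d(x,v) + d(y,u)) + ⌊k/2⌋. -/
/-!
If `d(x,y) + d(u,v)` exceeds both `d(x,u) + d(y,v)` and `d(x,v) + d(y,u)` by more than
`m = ⌊k/2⌋ ≥ 2`, then in a geodesic quadrilateral `x u y v` opposite sides stay at distance at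
least two. At each corner take the outermost edge joining the two sides that meet there; cutting
the four corners off along these edges leaves an induced cycle, and the triangle inequality
through the four cutting edges shows that this cycle has at least `2m + 2 > k` vertices.
-/

/-- A graph is `k`-chordal if it has no induced cycle of length greater than `k`:
for every `n > k` (with `n ≥ 3`) there is no graph embedding of the cycle graph
`C_n` into `G`. -/
def IsKChordal {V : Type*} (G : SimpleGraph V) (k : ℕ) : Prop :=
  ∀ n : ℕ, 3 ≤ n → k < n → IsEmpty (SimpleGraph.cycleGraph n ↪g G)

lemma exists_min_fst_max_snd {R : ℕ → ℕ → Prop} {a b j₀ : ℕ} (h : R a j₀) (hj₀ : j₀ ≤ b) :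
    ∃ i ≤ a, ∃ j ≤ b, R i j ∧ (∀ i' < i, ∀ j' ≤ b, ¬R i' j') ∧
      ∀ j', j < j' → j' ≤ b → ¬R i j' := by
  classical
  have hP : ∃ i, ∃ j ≤ b, R i j := ⟨a, j₀, hj₀, h⟩
  obtain ⟨j₁, hj₁, hR⟩ := Nat.find_spec hP
  exact ⟨Nat.find hP, Nat.find_min' hP ⟨j₀, hj₀, h⟩, _, Nat.findGreatest_le b,
    Nat.findGreatest_spec (P := R (Nat.find hP)) hj₁ hR,
    fun i' hi' j' hj' hR' => Nat.find_min hP hi' ⟨j', hj', hR'⟩,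
    fun _ => Nat.findGreatest_is_greatest⟩

namespace SimpleGraph

variable {V : Type*} {G : SimpleGraph V}

lemma Connected.dist_le_add_add (hG : G.Connected) (a b c d : V) :
    G.dist a d ≤ G.dist a b + G.dist b c + G.dist c d :=
  hG.dist_triangle.trans (Nat.add_le_add_right hG.dist_triangle _)

lemma Walk.dist_getVert_le {u v : V} (w : G.Walk u v) {i j : ℕ} (hij : i ≤ j) :
    G.dist (w.getVert i) (w.getVert j) ≤ j - i := by
  have hend : (w.drop i).getVert (j - i) = w.getVert j := by
    rw [Walk.drop_getVert, Nat.add_sub_cancel' hij]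
  calc G.dist (w.getVert i) (w.getVert j)
      _ = G.dist (w.getVert i) ((w.drop i).getVert (j - i)) := by rw [hend]
      _ ≤ ((w.drop i).take (j - i)).length := dist_le _
      _ ≤ j - i := by simp

structure IsGeodesic (G : SimpleGraph V) (f : ℕ → V) (x y : V) : Prop where
  apply_zero : f 0 = x
  apply_dist : f (G.dist x y) = y
  dist_eq : ∀ ⦃i j⦄, i ≤ j → j ≤ G.dist x y → G.dist (f i) (f j) = j - i

lemma Connected.exists_isGeodesic (hG : G.Connected) (x y : V) : ∃ f, IsGeodesic G f x y := by
  obtain ⟨w, hw⟩ := hG.exists_walk_length_eq_dist x y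
  refine ⟨w.getVert, w.getVert_zero, hw ▸ w.getVert_length, fun i j hij hj => ?_⟩
  refine le_antisymm (w.dist_getVert_le hij) ?_
  have h := hG.dist_le_add_add x (w.getVert i) (w.getVert j) y
  have hi := w.dist_getVert_le (Nat.zero_le i)
  have hj' := w.dist_getVert_le (hw ▸ hj : j ≤ w.length)
  rw [w.getVert_zero] at hi
  rw [w.getVert_length, hw] at hj'
  omega

namespace IsGeodesic

variable {f : ℕ → V} {x y : V}

lemma dist_left (h : IsGeodesic G f x y) {i : ℕ} (hi : i ≤ G.dist x y) : G.dist x (f i) = i := by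
  simpa [h.apply_zero] using h.dist_eq (Nat.zero_le i) hi

lemma dist_right (h : IsGeodesic G f x y) {i : ℕ} (hi : i ≤ G.dist x y) :
    G.dist (f i) y = G.dist x y - i := by
  simpa [h.apply_dist] using h.dist_eq hi le_rfl

end IsGeodesic

def IsInducedPath (G : SimpleGraph V) (f : ℕ → V) (L : ℕ) : Prop :=
  (∀ i < L, G.Adj (f i) (f (i + 1))) ∧ ∀ ⦃i j⦄, i + 2 ≤ j → j ≤ L → 2 ≤ G.dist (f i) (f j)

lemma IsGeodesic.isInducedPath_shift {f : ℕ → V} {x y : V} (h : IsGeodesic G f x y) {s L : ℕ}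
    (hL : s + L ≤ G.dist x y) : IsInducedPath G (fun t => f (s + t)) L := by
  refine ⟨fun i hi => ?_, fun i j hij hj => ?_⟩
  · rw [← dist_eq_one_iff_adj, h.dist_eq (by omega) (by omega)]
    omega
  · rw [h.dist_eq (by omega) (by omega)]
    omega

def concatSeq (A : ℕ) (α β : ℕ → V) (t : ℕ) : V :=
  if t ≤ A then α t else β (t - (A + 1))

section concatSeq

variable {A B : ℕ} {α β : ℕ → V}

lemma concatSeq_of_le {t : ℕ} (h : t ≤ A) : concatSeq A α β t = α t := if_pos h

lemma concatSeq_add (j : ℕ) : concatSeq A α β (A + j + 1) = β j := by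
  rw [concatSeq, if_neg (by omega)]
  congr 1
  omega

lemma concatSeq_adj_succ (hα : ∀ i < A, G.Adj (α i) (α (i + 1)))
    (hβ : ∀ j < B, G.Adj (β j) (β (j + 1))) (hjoin : G.Adj (α A) (β 0)) :
    ∀ t < A + B + 1, G.Adj (concatSeq A α β t) (concatSeq A α β (t + 1)) := by
  intro t ht
  rcases (le_or_gt t A).imp_right Nat.exists_eq_add_of_lt with h | ⟨j, rfl⟩
  · rcases h.lt_or_eq with h | rfl
    · rw [concatSeq_of_le h.le, concatSeq_of_le h]
      exact hα t h
    · rwa [concatSeq_of_le le_rfl, show concatSeq t α β (t + 1) = β 0 from concatSeq_add 0]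
  · rw [concatSeq_add, show A + j + 1 + 1 = A + (j + 1) + 1 by omega, concatSeq_add]
    exact hβ j (by omega)

lemma concatSeq_two_le_dist
    (hα : ∀ ⦃i j⦄, i + 2 ≤ j → j ≤ A → 2 ≤ G.dist (α i) (α j))
    (hβ : ∀ ⦃i j⦄, i + 2 ≤ j → j ≤ B → 2 ≤ G.dist (β i) (β j)) {i j : ℕ}
    (hij : i + 2 ≤ j) (hj : j ≤ A + B + 1)
    (hcross : ∀ j', i ≤ A → j = A + j' + 1 → 2 ≤ G.dist (α i) (β j')) :
    2 ≤ G.dist (concatSeq A α β i) (concatSeq A α β j) := by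
  rcases (le_or_gt j A).imp_right Nat.exists_eq_add_of_lt with hjA | ⟨j', rfl⟩
  · rw [concatSeq_of_le (by omega), concatSeq_of_le hjA]
    exact hα hij hjA
  rcases (le_or_gt i A).imp_right Nat.exists_eq_add_of_lt with hiA | ⟨i', rfl⟩
  · rw [concatSeq_of_le hiA, concatSeq_add]
    exact hcross j' hiA rfl
  · rw [concatSeq_add, concatSeq_add]
    exact hβ (by omega) (by omega)

end concatSeq

lemma IsInducedPath.concat {A B : ℕ} {α β : ℕ → V} (hα : IsInducedPath G α A)
    (hβ : IsInducedPath G β B) (hjoin : G.Adj (α A) (β 0))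
    (hcross : ∀ i ≤ A, ∀ j ≤ B, ¬(i = A ∧ j = 0) → 2 ≤ G.dist (α i) (β j)) :
    IsInducedPath G (concatSeq A α β) (A + B + 1) :=
  ⟨concatSeq_adj_succ hα.1 hβ.1 hjoin, fun _ _ hij hj =>
    concatSeq_two_le_dist hα.2 hβ.2 hij hj fun _ hi hj' =>
      hcross _ hi _ (by omega) (by omega)⟩

lemma nonempty_embedding_of_two_le_dist {W : Type*} {H : SimpleGraph W} (f : W → V)
    (hadj : ∀ ⦃a b⦄, H.Adj a b → G.Adj (f a) (f b))
    (hfar : ∀ ⦃a b⦄, a ≠ b → ¬H.Adj a b → 2 ≤ G.dist (f a) (f b)) : Nonempty (H ↪g G) := by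
  have hne : ∀ ⦃a b⦄, a ≠ b → f a ≠ f b := fun a b hab heq => by
    by_cases h : H.Adj a b
    · exact (hadj h).ne heq
    · have := hfar hab h
      rw [heq, dist_self] at this
      omega
  refine ⟨⟨⟨f, fun a b => not_imp_not.mp (@hne a b)⟩, fun {a b} => ⟨fun h => ?_, (hadj ·)⟩⟩⟩
  by_contra hab
  have := hfar (by rintro rfl; exact G.irrefl h) hab
  have hone : G.dist (f a) (f b) = 1 := dist_eq_one_iff_adj.mpr h
  omega

lemma cycleGraph_adj_iff_of_val_lt {n : ℕ} {a b : Fin n} (h : a.val < b.val) :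
    (cycleGraph n).Adj a b ↔ b.val = a.val + 1 ∨ (a.val = 0 ∧ b.val + 1 = n) := by
  rw [cycleGraph_adj', Fin.coe_sub_iff_lt.mpr h, Fin.coe_sub_iff_le.mpr h.le]
  omega

lemma nonempty_cycleGraph_embedding_of_seq {L : ℕ} (f : ℕ → V)
    (hadj : ∀ i < L, G.Adj (f i) (f (i + 1))) (hclose : G.Adj (f L) (f 0))
    (hfar : ∀ ⦃i j⦄, i + 2 ≤ j → j ≤ L → ¬(i = 0 ∧ j = L) → 2 ≤ G.dist (f i) (f j)) :
    Nonempty (cycleGraph (L + 1) ↪g G) := by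
  have key : ∀ a b : Fin (L + 1), a.val < b.val →
      ((cycleGraph (L + 1)).Adj a b → G.Adj (f a) (f b)) ∧
        (¬(cycleGraph (L + 1)).Adj a b → 2 ≤ G.dist (f a) (f b)) := by
    intro a b hab
    rw [cycleGraph_adj_iff_of_val_lt hab]
    refine ⟨?_, fun h => hfar (by omega) (by omega) (by omega)⟩
    rintro (h | ⟨h0, hL⟩)
    · rw [h]
      exact hadj a (by omega)
    · rw [h0, show b.val = L by omega]
      exact hclose.symm
  refine nonempty_embedding_of_two_le_dist (fun a : Fin (L + 1) => f a) (fun a b h => ?_)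
    (fun a b hne h => ?_)
  · rcases lt_or_gt_of_ne (Fin.val_ne_of_ne h.ne) with hab | hab
    · exact (key a b hab).1 h
    · exact ((key b a hab).1 h.symm).symm
  · rcases lt_or_gt_of_ne (Fin.val_ne_of_ne hne) with hab | hab
    · exact (key a b hab).2 h
    · rw [dist_comm]
      exact (key b a hab).2 fun h' => h h'.symm

lemma IsInducedPath.nonempty_cycleGraph_embedding {A B : ℕ} {α β : ℕ → V}
    (hα : IsInducedPath G α A) (hβ : IsInducedPath G β B) (hjoin : G.Adj (α A) (β 0))
    (hclose : G.Adj (β B) (α 0))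
    (hcross : ∀ i ≤ A, ∀ j ≤ B, ¬(i = A ∧ j = 0) → ¬(i = 0 ∧ j = B) →
      2 ≤ G.dist (α i) (β j)) :
    Nonempty (cycleGraph (A + B + 2) ↪g G) := by
  refine nonempty_cycleGraph_embedding_of_seq (concatSeq A α β)
    (concatSeq_adj_succ hα.1 hβ.1 hjoin) ?_ fun i j hij hj hne => ?_
  · rwa [concatSeq_of_le (Nat.zero_le A), concatSeq_add]
  · exact concatSeq_two_le_dist hα.2 hβ.2 hij hj fun j' hi hj' =>
      hcross i hi j' (by omega) (by omega) (by omega)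

structure IsCornerShortcut (G : SimpleGraph V) (p q : ℕ → V) (a b i j : ℕ) : Prop where
  le_left : i ≤ a
  le_right : j ≤ b
  adj : G.Adj (p i) (q j)
  two_le_dist : ∀ ⦃i' j'⦄, i' ≤ i → j ≤ j' → j' ≤ b → ¬(i' = i ∧ j' = j) →
    2 ≤ G.dist (p i') (q j')

section Quadrilateral

variable {p q r s : ℕ → V} {x u y v : V}

/-- Take `i` minimal such that some `q j` lies within distance one of `p i`, then `j` maximal.
By these extremal choices `p i = q j` would force `i = 0` and `j = dist u y`, i.e. `x = y`. -/
lemma exists_isCornerShortcut (hG : G.Connected) (hp : IsGeodesic G p x u)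
    (hq : IsGeodesic G q u y) (hxy : x ≠ y) :
    ∃ i j, IsCornerShortcut G p q (G.dist x u) (G.dist u y) i j := by
  obtain ⟨i, hia, j, hjb, hd, hi_min, hj_max⟩ :=
    exists_min_fst_max_snd (R := fun i j => G.dist (p i) (q j) ≤ 1) (a := G.dist x u)
      (by rw [hp.apply_dist, hq.apply_zero, dist_self]; omega) (Nat.zero_le (G.dist u y))
  have hfar_lt : ∀ i' < i, ∀ j' ≤ G.dist u y, 2 ≤ G.dist (p i') (q j') := fun i' hi' j' hj' => by
    have := hi_min i' hi' j' hj'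
    omega
  have hfar_gt : ∀ j', j < j' → j' ≤ G.dist u y → 2 ≤ G.dist (p i) (q j') := fun j' h h' => by
    have := hj_max j' h h'
    omega
  have hne : p i ≠ q j := by
    intro heq
    have hi : i = 0 := by
      by_contra hi
      have h := hfar_lt (i - 1) (by omega) j hjb
      rw [← heq, hp.dist_eq (by omega) hia] at h
      omega
    have hj : j = G.dist u y := by
      by_contra hj
      have h := hfar_gt (j + 1) (by omega) (by omega)
      rw [heq, hq.dist_eq (by omega) (by omega)] at h
      omega
    apply hxy
    rw [← hp.apply_zero, ← hq.apply_dist, ← hi, ← hj, heq]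
  refine ⟨i, j, hia, hjb, ?_, fun i' j' hi' hj' hj'b hne' => ?_⟩
  · have := hG.pos_dist_of_ne hne
    exact dist_eq_one_iff_adj.mp (by omega)
  · rcases hi'.lt_or_eq with h | rfl
    · exact hfar_lt i' h j' hj'b
    · exact hfar_gt j' (hj'.lt_of_ne fun h => hne' ⟨rfl, h.symm⟩) hj'b

lemma IsCornerShortcut.dist_le {i j : ℕ} (hG : G.Connected) (hp : IsGeodesic G p x u)
    (hq : IsGeodesic G q u y) (hc : IsCornerShortcut G p q (G.dist x u) (G.dist u y) i j) :
    G.dist x y ≤ i + 1 + (G.dist u y - j) := by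
  have h := hG.dist_le_add_add x (p i) (q j) y
  rwa [hp.dist_left hc.le_left, dist_eq_one_iff_adj.mpr hc.adj, hq.dist_right hc.le_right] at h

lemma IsGeodesic.two_le_dist_of_opposite {i l : ℕ} (hG : G.Connected) (hp : IsGeodesic G p x u)
    (hr : IsGeodesic G r y v) (h : G.dist x u + G.dist y v + 2 < G.dist x y + G.dist u v)
    (hi : i ≤ G.dist x u) (hl : l ≤ G.dist y v) : 2 ≤ G.dist (p i) (r l) := by
  have h₁ := hG.dist_le_add_add x (p i) (r l) y
  have h₂ := hG.dist_le_add_add u (p i) (r l) v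
  rw [hp.dist_left hi, G.dist_comm (u := r l), hr.dist_left hl] at h₁
  rw [G.dist_comm (u := u) (v := p i), hp.dist_right hi, hr.dist_right hl] at h₂
  omega

lemma IsCornerShortcut.le_of_isCornerShortcut {i₁ j₁ j₂ l₂ : ℕ} (hG : G.Connected)
    (hp : IsGeodesic G p x u) (hq : IsGeodesic G q u y) (hr : IsGeodesic G r y v)
    (h : G.dist x u + G.dist y v + 2 < G.dist x y + G.dist u v)
    (h₁ : IsCornerShortcut G p q (G.dist x u) (G.dist u y) i₁ j₁)
    (h₂ : IsCornerShortcut G q r (G.dist u y) (G.dist y v) j₂ l₂) : j₁ ≤ j₂ := by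
  have cut₁ := h₁.dist_le hG hp hq
  have cut₂ := h₂.dist_le hG hq hr
  have h₃ : G.dist u (q j₁) ≤ G.dist u (p i₁) + G.dist (p i₁) (q j₁) := hG.dist_triangle
  rw [hq.dist_left h₁.le_right, G.dist_comm (u := u) (v := p i₁), hp.dist_right h₁.le_left,
    dist_eq_one_iff_adj.mpr h₁.adj] at h₃
  have h₄ := hG.dist_le_add_add u (q j₂) (r l₂) y
  rw [hq.dist_left h₂.le_left, dist_eq_one_iff_adj.mpr h₂.adj, G.dist_comm (u := r l₂) (v := y),
    hr.dist_left h₂.le_right] at h₄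
  have := h₁.le_left
  have := h₁.le_right
  have := h₂.le_right
  omega

lemma IsCornerShortcut.isInducedPath_concat {i j i₀ j₂ : ℕ} (hp : IsGeodesic G p x u)
    (hq : IsGeodesic G q u y) (hc : IsCornerShortcut G p q (G.dist x u) (G.dist u y) i j)
    (hi₀ : i₀ ≤ i) (hj₂ : j ≤ j₂) (hj₂u : j₂ ≤ G.dist u y) :
    IsInducedPath G (concatSeq (i - i₀) (fun t => p (i₀ + t)) (fun t => q (j + t)))
      (i - i₀ + (j₂ - j) + 1) :=
  (hp.isInducedPath_shift (by have := hc.le_left; omega)).concat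
    (hq.isInducedPath_shift (by omega)) (by simpa [Nat.add_sub_cancel' hi₀] using hc.adj)
    fun a ha b hb hne => hc.two_le_dist (by omega) (by omega) (by omega)
      (by omega)

/-- The cycle runs along `p` from `i₄` to `i₁`, crosses to `q j₁`, runs along `q` to `j₂`,
and so on around the quadrilateral `x u y v`. -/
lemma IsCornerShortcut.nonempty_cycleGraph_embedding {i₁ j₁ j₂ l₂ l₃ t₃ t₄ i₄ : ℕ}
    (hG : G.Connected) (hp : IsGeodesic G p x u) (hq : IsGeodesic G q u y)
    (hr : IsGeodesic G r y v) (hs : IsGeodesic G s v x)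
    (h₁ : G.dist x u + G.dist y v + 2 < G.dist x y + G.dist u v)
    (h₂ : G.dist u y + G.dist v x + 2 < G.dist u v + G.dist y x)
    (c₁ : IsCornerShortcut G p q (G.dist x u) (G.dist u y) i₁ j₁)
    (c₂ : IsCornerShortcut G q r (G.dist u y) (G.dist y v) j₂ l₂)
    (c₃ : IsCornerShortcut G r s (G.dist y v) (G.dist v x) l₃ t₃)
    (c₄ : IsCornerShortcut G s p (G.dist v x) (G.dist x u) t₄ i₄) :
    Nonempty (cycleGraph (i₁ - i₄ + (j₂ - j₁) + 1 + (l₃ - l₂ + (t₄ - t₃) + 1) + 2) ↪g G) := by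
  have hyx := G.dist_comm (u := y) (v := x)
  have hvu := G.dist_comm (u := v) (v := u)
  have hj := c₁.le_of_isCornerShortcut hG hp hq hr h₁ c₂
  have hl := c₂.le_of_isCornerShortcut hG hq hr hs h₂ c₃
  have ht := c₃.le_of_isCornerShortcut hG hr hs hp (by omega) c₄
  have hi := c₄.le_of_isCornerShortcut hG hs hp hq (by omega) c₁
  refine (c₁.isInducedPath_concat hp hq hi hj c₂.le_left).nonempty_cycleGraph_embedding
    (c₃.isInducedPath_concat hr hs hl ht c₄.le_left) ?_ ?_ ?_
  · rw [concatSeq_add, concatSeq_of_le (Nat.zero_le _), Nat.add_sub_cancel' hj, Nat.add_zero]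
    exact c₂.adj
  · rw [concatSeq_add, concatSeq_of_le (Nat.zero_le _), Nat.add_sub_cancel' ht, Nat.add_zero]
    exact c₄.adj
  intro a ha b hb hA h0
  have := c₁.le_left
  have := c₂.le_left
  have := c₃.le_left
  have := c₄.le_left
  rcases (le_or_gt a (i₁ - i₄)).imp_right Nat.exists_eq_add_of_lt with ha' | ⟨a, rfl⟩ <;>
    rcases (le_or_gt b (l₃ - l₂)).imp_right Nat.exists_eq_add_of_lt with hb' | ⟨b, rfl⟩
  · rw [concatSeq_of_le ha', concatSeq_of_le hb']
    exact hp.two_le_dist_of_opposite hG hr h₁ (by omega) (by omega)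
  · rw [concatSeq_of_le ha', concatSeq_add, dist_comm]
    exact c₄.two_le_dist (by omega) (by omega) (by omega) (by omega)
  · rw [concatSeq_add, concatSeq_of_le hb']
    exact c₂.two_le_dist (by omega) (by omega) (by omega) (by omega)
  · rw [concatSeq_add, concatSeq_add]
    exact hq.two_le_dist_of_opposite hG hs h₂ (by omega) (by omega)

lemma Connected.exists_long_cycleGraph_embedding (hG : G.Connected) {m : ℕ} (hm : 2 ≤ m)
    (h₁ : G.dist x u + G.dist y v + m < G.dist x y + G.dist u v)
    (h₂ : G.dist x v + G.dist y u + m < G.dist x y + G.dist u v) :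
    ∃ n, 2 * m + 2 ≤ n ∧ Nonempty (cycleGraph n ↪g G) := by
  have hyx := G.dist_comm (u := y) (v := x)
  have hvu := G.dist_comm (u := v) (v := u)
  have hxv := G.dist_comm (u := x) (v := v)
  have hyu := G.dist_comm (u := y) (v := u)
  have hxy : x ≠ y := by
    rintro rfl
    have := hG.dist_triangle (u := u) (v := x) (w := v)
    rw [dist_self] at h₁
    omega
  have huv : u ≠ v := by
    rintro rfl
    have := hG.dist_triangle (u := x) (v := u) (w := y)
    rw [dist_self] at h₁
    omega
  obtain ⟨p, hp⟩ := hG.exists_isGeodesic x u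
  obtain ⟨q, hq⟩ := hG.exists_isGeodesic u y
  obtain ⟨r, hr⟩ := hG.exists_isGeodesic y v
  obtain ⟨s, hs⟩ := hG.exists_isGeodesic v x
  obtain ⟨i₁, j₁, c₁⟩ := exists_isCornerShortcut hG hp hq hxy
  obtain ⟨j₂, l₂, c₂⟩ := exists_isCornerShortcut hG hq hr huv
  obtain ⟨l₃, t₃, c₃⟩ := exists_isCornerShortcut hG hr hs hxy.symm
  obtain ⟨t₄, i₄, c₄⟩ := exists_isCornerShortcut hG hs hp huv.symm
  refine ⟨_, ?_, c₁.nonempty_cycleGraph_embedding hG hp hq hr hs (by omega) (by omega) c₂ c₃ c₄⟩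
  have := c₁.dist_le hG hp hq
  have := c₂.dist_le hG hq hr
  have := c₃.dist_le hG hr hs
  have := c₄.dist_le hG hs hp
  have := c₁.le_right
  have := c₂.le_right
  have := c₃.le_right
  have := c₄.le_right
  omega

end Quadrilateral

end SimpleGraph

/-- Every connected `k`-chordal graph (`k ≥ 4`) is `(⌊k/2⌋/2)`-hyperbolic. -/
theorem chordal_hyperbolic {V : Type*} (G : SimpleGraph V) (hG : G.Connected)
    (k : ℕ) (hk : 4 ≤ k) (hchord : IsKChordal G k) :
    ∀ x y u v : V,
      G.dist x y + G.dist u v ≤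
        max (G.dist x u + G.dist y v) (G.dist x v + G.dist y u) + k / 2 := by
  intro x y u v
  by_contra! h
  rw [← max_add_add_right, max_lt_iff] at h
  obtain ⟨n, hn, ⟨e⟩⟩ := hG.exists_long_cycleGraph_embedding (m := k / 2) (by omega) h.1 h.2
  exact (hchord n (by omega) (by omega)).false e
end

section
/- For every integer k ≥ 4 there exists a finite connected k-chordal simple graph G together with vertices x, y, u, v such that d(x,y) + d(u,v) ≥ max(d(x,u) + d(y,v), d(x,v) + d(y,u)) + ⌊k/2⌋. In particular, G is not (⌊(k−2)/2⌋/2)-hyperbolic, so the bound ⌊k/2⌋/2 of the main theorem is sharp for every k ≥ 4. -/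
open SimpleGraph Finset

theorem IsKChordal.mono {V : Type*} {G : SimpleGraph V} {k l : ℕ} (h : IsKChordal G k)
    (hkl : k ≤ l) : IsKChordal G l :=
  fun n h3 hn ↦ h n h3 (hkl.trans_lt hn)

namespace SimpleGraph

theorem cycleGraph_adj_iff_val {n : ℕ} (hn : 2 ≤ n) {a b : Fin n} :
    (cycleGraph n).Adj a b ↔ a.val + 1 = b.val ∨ b.val + 1 = a.val ∨
      (a.val = 0 ∧ b.val + 1 = n) ∨ (b.val = 0 ∧ a.val + 1 = n) := by
  have := a.isLt
  rw [cycleGraph_adj']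
  rcases lt_trichotomy a b with h | rfl | h
  · rw [Fin.coe_sub_iff_lt.mpr h, Fin.sub_val_of_le h.le]
    omega
  · simp only [Fin.sub_def, Nat.sub_add_cancel this.le, Nat.mod_self]
    omega
  · rw [Fin.coe_sub_iff_lt.mpr h, Fin.sub_val_of_le h.le]
    omega

theorem cycleGraph_cliqueFree_three {n : ℕ} (hn : 4 ≤ n) : (cycleGraph n).CliqueFree 3 := by
  intro s hs
  obtain ⟨a, b, c, hab, hac, hbc, -⟩ := is3Clique_iff.1 hs
  have hab' := Fin.val_ne_of_ne hab.ne
  have hac' := Fin.val_ne_of_ne hac.ne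
  have hbc' := Fin.val_ne_of_ne hbc.ne
  rw [cycleGraph_adj_iff_val (by omega)] at hab hac hbc
  omega

theorem Embedding.exists_mem_notMem_range_of_isNClique {V W : Type*} {G : SimpleGraph V}
    {H : SimpleGraph W} (f : H ↪g G) {n : ℕ} (hH : H.CliqueFree n) {s : Finset V}
    (hs : G.IsNClique n s) : ∃ w ∈ s, w ∉ Set.range f := by
  by_contra! hsub
  classical
  refine hH (s.preimage f f.injective.injOn) ⟨fun a ha b hb hab ↦ ?_, ?_⟩
  · exact f.map_adj_iff.1 <|
      hs.isClique (mem_preimage.1 ha) (mem_preimage.1 hb) (f.injective.ne hab)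
  · rw [← hs.card_eq, ← card_image_of_injective _ f.injective, image_preimage,
      filter_true_of_mem hsub]

theorem Reachable.apply_le_apply_add_dist {V : Type*} {G : SimpleGraph V} {φ : V → ℕ}
    (hφ : ∀ a b, G.Adj a b → φ b ≤ φ a + 1) {x y : V} (h : G.Reachable x y) :
    φ y ≤ φ x + G.dist x y := by
  obtain ⟨p, hp⟩ := h.exists_walk_length_eq_dist
  rw [← hp]
  clear hp h
  induction p with
  | nil => simp
  | cons hadj p ih =>
    have := hφ _ _ hadj
    rw [Walk.length_cons]
    omega

theorem pathGraph_dist_le {n : ℕ} (a b : Fin n) : (pathGraph n).dist a b ≤ Nat.dist a b := by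
  wlog hab : a ≤ b generalizing a b
  · rw [dist_comm, Nat.dist_comm]
    exact this b a (le_of_not_ge hab)
  obtain ⟨d, hd⟩ := Nat.exists_eq_add_of_le (Fin.le_def.1 hab)
  rw [Nat.dist_eq_sub_of_le hab, hd, Nat.add_sub_cancel_left]
  induction d generalizing b with
  | zero => simp [Fin.ext hd]
  | succ d ih =>
    let b' : Fin n := ⟨a + d, by omega⟩
    have hb' : (pathGraph n).Adj b' b := pathGraph_adj.2 (.inl (by simp only [b']; omega))
    calc (pathGraph n).dist a b ≤ (pathGraph n).dist a b' + (pathGraph n).dist b' b :=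
          (pathGraph_preconnected n a b').dist_triangle_left b
      _ ≤ d + 1 :=
        add_le_add (ih b' (Fin.le_def.2 (Nat.le_add_right _ _)) rfl) (dist_eq_one_iff_adj.2 hb').le

end SimpleGraph

theorem isKChordal_of_disjoint_triangles {V : Type*} [Fintype V] {G : SimpleGraph V}
    {s t : Finset V} (hs : G.IsNClique 3 s) (ht : G.IsNClique 3 t) (hst : Disjoint s t) :
    IsKChordal G (Fintype.card V - 2) := by
  classical
  intro n h3 hn
  refine ⟨fun f ↦ ?_⟩
  have hV : 6 ≤ Fintype.card V := by
    simpa [card_union_of_disjoint hst, hs.card_eq, ht.card_eq] using card_le_univ (s ∪ t)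
  have hfree := cycleGraph_cliqueFree_three (n := n) (by omega)
  obtain ⟨w₁, hw₁s, hw₁⟩ := f.exists_mem_notMem_range_of_isNClique hfree hs
  obtain ⟨w₂, hw₂t, hw₂⟩ := f.exists_mem_notMem_range_of_isNClique hfree ht
  have hne : w₁ ≠ w₂ := fun h ↦ disjoint_left.1 hst hw₁s (h ▸ hw₂t)
  have hcard : n ≤ Fintype.card V - 2 := calc
    n = (univ.image f).card := by
      rw [card_image_of_injective _ f.injective, card_univ, Fintype.card_fin]
    _ ≤ (univ \ {w₁, w₂}).card := card_le_card fun w hw ↦ by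
      obtain ⟨z, -, rfl⟩ := mem_image.1 hw
      simp only [mem_sdiff, mem_univ, mem_insert, mem_singleton, true_and]
      rintro (h | h)
      exacts [hw₁ ⟨z, h⟩, hw₂ ⟨z, h⟩]
    _ = Fintype.card V - 2 := by rw [card_univ_sdiff, card_pair hne]
  omega

def cycleDist (n i j : ℕ) : ℕ := min (Nat.dist i j) (n - Nat.dist i j)

theorem cycleDist_triangle {n i j l : ℕ} (hi : i < n) (hj : j < n) (hl : l < n) :
    cycleDist n i l ≤ cycleDist n i j + cycleDist n j l := by
  simp only [cycleDist, Nat.dist]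
  omega

def chordedCycle (m : ℕ) : SimpleGraph (Fin (2 * m + 2)) :=
  fromRel fun a b ↦ b.val = a.val + 1 ∨ (a.val = 0 ∧ b.val = 2 * m + 1) ∨
    (a.val = 0 ∧ b.val = 2) ∨ (a.val = m + 1 ∧ b.val = m + 3)

namespace chordedCycle

variable {m : ℕ}

theorem adj_iff {a b : Fin (2 * m + 2)} :
    (chordedCycle m).Adj a b ↔ a.val ≠ b.val ∧
      ((b.val = a.val + 1 ∨ (a.val = 0 ∧ b.val = 2 * m + 1) ∨
          (a.val = 0 ∧ b.val = 2) ∨ (a.val = m + 1 ∧ b.val = m + 3)) ∨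
        (a.val = b.val + 1 ∨ (b.val = 0 ∧ a.val = 2 * m + 1) ∨
          (b.val = 0 ∧ a.val = 2) ∨ (b.val = m + 1 ∧ a.val = m + 3))) := by
  rw [chordedCycle, fromRel_adj, ne_eq, Fin.ext_iff]

theorem pathGraph_le : pathGraph (2 * m + 2) ≤ chordedCycle m := fun a b h ↦
  adj_iff.2 (by rw [pathGraph_adj] at h; omega)

theorem connected (m : ℕ) : (chordedCycle m).Connected :=
  (pathGraph_connected _).mono pathGraph_le

theorem dist_le_natDist (a b : Fin (2 * m + 2)) : (chordedCycle m).dist a b ≤ Nat.dist a b :=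
  ((pathGraph_preconnected _ a b).dist_anti pathGraph_le).trans (pathGraph_dist_le a b)

theorem dist_le_natDist_add_one_of_adj {a c : Fin (2 * m + 2)} (h : (chordedCycle m).Adj a c)
    (b : Fin (2 * m + 2)) : (chordedCycle m).dist a b ≤ Nat.dist c b + 1 :=
  calc (chordedCycle m).dist a b ≤ (chordedCycle m).dist a c + (chordedCycle m).dist c b :=
        (connected m).dist_triangle
    _ ≤ 1 + Nat.dist c b := by rw [dist_eq_one_iff_adj.2 h]; grw [dist_le_natDist]
    _ = Nat.dist c b + 1 := add_comm _ _

theorem isKChordal (hm : 2 ≤ m) : IsKChordal (chordedCycle m) (2 * m) := by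
  have h₁ : (chordedCycle m).IsNClique 3 {⟨0, by omega⟩, ⟨1, by omega⟩, ⟨2, by omega⟩} := by
    simp [is3Clique_triple_iff, adj_iff]
  have h₂ : (chordedCycle m).IsNClique 3
      {⟨m + 1, by omega⟩, ⟨m + 2, by omega⟩, ⟨m + 3, by omega⟩} := by
    simp [is3Clique_triple_iff, adj_iff]
  have := isKChordal_of_disjoint_triangles h₁ h₂ (by
    simp only [disjoint_iff_ne, mem_insert, mem_singleton, ne_eq, Fin.ext_iff]
    omega)
  rwa [Fintype.card_fin, show 2 * m + 2 - 2 = 2 * m by omega] at this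

/-- Contracting the edges `{1, 2}` and `{m + 2, m + 3}` maps `chordedCycle m` onto `C_{2m}`. -/
def contract (m i : ℕ) : ℕ := if i ≤ 1 then i else if i ≤ m + 2 then i - 1 else i - 2

theorem cycleDist_contract_le_one {a b : Fin (2 * m + 2)} (h : (chordedCycle m).Adj a b) :
    cycleDist (2 * m) (contract m a) (contract m b) ≤ 1 := by
  rw [adj_iff] at h
  simp only [cycleDist, contract, Nat.dist]
  split_ifs <;> omega

theorem cycleDist_contract_le_dist (hm : 2 ≤ m) (a b : Fin (2 * m + 2)) :
    cycleDist (2 * m) (contract m a) (contract m b) ≤ (chordedCycle m).dist a b := by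
  have hlt (c : Fin (2 * m + 2)) : contract m c < 2 * m := by
    have := c.isLt
    unfold contract
    split_ifs <;> omega
  have := ((connected m).preconnected a b).apply_le_apply_add_dist
    (φ := fun c : Fin (2 * m + 2) ↦ cycleDist (2 * m) (contract m a) (contract m c)) fun c d h ↦
      (cycleDist_triangle (hlt a) (hlt c) (hlt d)).trans (by grw [cycleDist_contract_le_one h])
  simpa [cycleDist] using this

/-- Both chords are symmetric about the vertex `1`, so distances from it are those of `C_{2m+2}`. -/
theorem cycleDist_one_le_dist {a : Fin (2 * m + 2)} (ha : a.val = 1) (b : Fin (2 * m + 2)) :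
    cycleDist (2 * m + 2) 1 b ≤ (chordedCycle m).dist a b := by
  have := ((connected m).preconnected a b).apply_le_apply_add_dist
    (φ := fun c : Fin (2 * m + 2) ↦ cycleDist (2 * m + 2) 1 c) fun c d h ↦ by
      rw [adj_iff] at h
      simp only [cycleDist, Nat.dist]
      omega
  simpa [cycleDist, ha] using this

theorem exists_max_add_le_dist_add_dist (hm : 2 ≤ m) : ∃ x y u v : Fin (2 * m + 2),
    max ((chordedCycle m).dist x u + (chordedCycle m).dist y v)
        ((chordedCycle m).dist x v + (chordedCycle m).dist y u) + m ≤
      (chordedCycle m).dist x y + (chordedCycle m).dist u v := by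
  obtain ⟨q, r, hr, hmr⟩ : ∃ q r, r ≤ 1 ∧ m + r = 2 * q := ⟨(m + 1) / 2, m % 2, by omega, by omega⟩
  have vertex (i : ℕ) (hi : i < 2 * m + 2) : ∃ w : Fin (2 * m + 2), w.val = i := ⟨⟨i, hi⟩, rfl⟩
  obtain ⟨x, hx⟩ := vertex r (by omega)
  obtain ⟨y, hy⟩ := vertex (2 * q + 1) (by omega)
  obtain ⟨u, hu⟩ := vertex (q + 1) (by omega)
  obtain ⟨v, hv⟩ := vertex (3 * q + 2 - r) (by omega)
  obtain ⟨xNbr, hxNbr⟩ := vertex 2 (by omega)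
  obtain ⟨yNbr, hyNbr⟩ := vertex (m + 3) (by omega)
  obtain ⟨zero, hzero⟩ := vertex 0 (by omega)
  obtain ⟨last, hlast⟩ := vertex (2 * m + 1) (by omega)
  have hxy : 2 * q ≤ (chordedCycle m).dist x y := by
    obtain rfl | rfl : r = 0 ∨ r = 1 := by omega
    · have := cycleDist_contract_le_dist hm x y
      simp only [cycleDist, contract, Nat.dist, hx, hy] at this
      split_ifs at this <;> omega
    · have := cycleDist_one_le_dist hx y
      simp only [cycleDist, Nat.dist, hy] at this
      omega
  have huv : m ≤ (chordedCycle m).dist u v := by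
    have := cycleDist_contract_le_dist hm u v
    simp only [cycleDist, contract, Nat.dist, hu, hv] at this
    split_ifs at this <;> omega
  have hxu : (chordedCycle m).dist x u ≤ q := by
    have := dist_le_natDist_add_one_of_adj (adj_iff.2 (by omega) : (chordedCycle m).Adj x xNbr) u
    simp only [Nat.dist, hxNbr, hu] at this
    omega
  have hyv : (chordedCycle m).dist y v ≤ q := by
    have := dist_le_natDist_add_one_of_adj (adj_iff.2 (by omega) : (chordedCycle m).Adj y yNbr) v
    simp only [Nat.dist, hyNbr, hv] at this
    omega
  have hyu : (chordedCycle m).dist y u ≤ q := by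
    have := dist_le_natDist y u
    simp only [Nat.dist, hy, hu] at this
    omega
  have hxv : (chordedCycle m).dist x v ≤ q := by
    have h₁ := dist_le_natDist x zero
    have h₂ := dist_le_natDist_add_one_of_adj
      (adj_iff.2 (by omega) : (chordedCycle m).Adj zero last) v
    have h₃ := (connected m).dist_triangle (u := x) (v := zero) (w := v)
    simp only [Nat.dist, hx, hzero, hlast, hv] at h₁ h₂
    omega
  exact ⟨x, y, u, v, by omega⟩

end chordedCycle

/-- For every `k ≥ 4` there is a finite connected `k`-chordal graph containing a
quadruple of vertices witnessing that it is not `(⌊(k-2)/2⌋/2)`-hyperbolic, i.e.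
with `d(x,y) + d(u,v) ≥ max(d(x,u)+d(y,v), d(x,v)+d(y,u)) + ⌊k/2⌋`; thus the bound
`⌊k/2⌋/2` of the main theorem is sharp. -/
theorem chordal_hyperbolic_sharp (k : ℕ) (hk : 4 ≤ k) :
    ∃ (V : Type) (_ : Fintype V) (G : SimpleGraph V), G.Connected ∧ IsKChordal G k ∧
      ∃ x y u v : V,
        max (G.dist x u + G.dist y v) (G.dist x v + G.dist y u) + k / 2 ≤
          G.dist x y + G.dist u v := by
  have hm : 2 ≤ k / 2 := by omega
  exact ⟨_, inferInstance, chordedCycle (k / 2), chordedCycle.connected _,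
    (chordedCycle.isKChordal hm).mono (by omega), chordedCycle.exists_max_add_le_dist_add_dist hm⟩
end

section
/- Let G be a finite connected simple graph of diameter D (the maximum of d(x,y) over all pairs of vertices). Then the hyperbolicity of G is at most ⌊D/2⌋; that is, for all vertices x, y, u, v one has d(x,y) + d(u,v) ≤ max(d(x,u) + d(y,v), d(x,v) + d(y,u)) + 2·⌊D/2⌋. -/
/-- A finite connected graph of diameter `D` is `⌊D/2⌋`-hyperbolic. -/
theorem hyperbolicity_le_half_diam {V : Type*} [Fintype V] (G : SimpleGraph V)
    (hG : G.Connected) (D : ℕ) (hD : G.diam = D) :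
    ∀ x y u v : V,
      G.dist x y + G.dist u v ≤
        max (G.dist x u + G.dist y v) (G.dist x v + G.dist y u) + 2 * (D / 2) := by
  intro x y u v
  have hne : Nonempty V := ⟨x⟩
  have htop : G.ediam ≠ ⊤ := by
    obtain ⟨a, b, hab⟩ := G.exists_edist_eq_ediam_of_finite
    rw [← hab]
    exact SimpleGraph.edist_ne_top_iff_reachable.mpr (hG.preconnected a b)
  have hle : ∀ a b : V, G.dist a b ≤ D := fun a b => hD ▸ G.dist_le_diam htop
  have t1 : G.dist x y ≤ G.dist x u + G.dist u y := hG.dist_triangle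
  have t2 : G.dist x y ≤ G.dist x v + G.dist v y := hG.dist_triangle
  have t3 : G.dist u v ≤ G.dist u x + G.dist x v := hG.dist_triangle
  have t4 : G.dist u v ≤ G.dist u y + G.dist y v := hG.dist_triangle
  have c1 : G.dist u y = G.dist y u := SimpleGraph.dist_comm
  have c2 : G.dist v y = G.dist y v := SimpleGraph.dist_comm
  have c3 : G.dist u x = G.dist x u := SimpleGraph.dist_comm
  have h1 := hle x y
  have h2 := hle u v
  have h3 := hle x u
  have h4 := hle y v
  have h5 := hle x v
  have h6 := hle y u
  rcases le_total (G.dist x u + G.dist y v) (G.dist x v + G.dist y u) with h | h <;>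
    [rw [max_eq_right h]; rw [max_eq_left h]] <;> omega
end

section
/- For every n ≥ 3, the hyperbolicity of the n-cycle graph C_n equals ⌊n/4⌋ − 1/2 if n ≡ 1 (mod 4) and equals ⌊n/4⌋ otherwise. Concretely, setting h(n) = 2⌊n/4⌋ − 1 if n ≡ 1 (mod 4) and h(n) = 2⌊n/4⌋ otherwise: every quadruple of vertices x, y, u, v of C_n satisfies d(x,y) + d(u,v) ≤ max(d(x,u) + d(y,v), d(x,v) + d(y,u)) + h(n), and some quadruple satisfies d(x,y) + d(u,v) = max(d(x,u) + d(y,v), d(x,v) + d(y,u)) + h(n). -/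
/-!
Write `‖k‖ = min k (n - k)` (`cycleNorm`) for `k : Fin n`. The distance in `C_n` is `d(u, v) = ‖v - u‖`: the
forward and backward arcs give walks of these lengths, and `‖·‖` is subadditive and at most `1`
across an edge, so no walk is shorter. Translating by `-x`, a quadruple becomes `0, a, b, c`, and
after sorting `a ≤ b ≤ c` the three pair sums are explicit piecewise-linear functions of the four
arcs cut out by the points, so the bound is linear arithmetic. The quarter points `⌊i n / 4⌋`
attain it.
-/

/-- Twice the hyperbolicity of the `n`-cycle: `2⌊n/4⌋ - 1` if `n ≡ 1 (mod 4)`,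
and `2⌊n/4⌋` otherwise. -/
def cycleHypTwice (n : ℕ) : ℕ := if n % 4 = 1 then 2 * (n / 4) - 1 else 2 * (n / 4)

open SimpleGraph

def cycleNorm {n : ℕ} (k : Fin n) : ℕ := min k.val (n - k.val)

section

variable {n : ℕ}

lemma cycleNorm_le_val (k : Fin n) : cycleNorm k ≤ k.val := min_le_left _ _

lemma cycleNorm_of_two_mul_le {k : Fin n} (h : 2 * k.val ≤ n) : cycleNorm k = k.val :=
  min_eq_left (by omega)

lemma cycleNorm_neg (k : Fin n) : cycleNorm (-k) = cycleNorm k := by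
  unfold cycleNorm
  rw [Fin.val_neg']
  rcases Nat.eq_zero_or_pos k.val with hk | hk
  · simp [hk]
  · rw [Nat.mod_eq_of_lt (by omega)]
    omega

lemma cycleNorm_add_le (a b : Fin n) : cycleNorm (a + b) ≤ cycleNorm a + cycleNorm b := by
  unfold cycleNorm
  rw [Fin.val_add_eq_ite]
  have := a.isLt
  have := b.isLt
  split_ifs <;> omega

set_option maxHeartbeats 1000000 in
lemma cycleNorm_fourPoint_of_le {a b c : Fin n} (hab : a ≤ b) (hbc : b ≤ c) :
    cycleNorm a + cycleNorm (c - b) ≤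
        max (cycleNorm b + cycleNorm (c - a)) (cycleNorm c + cycleNorm (b - a)) + cycleHypTwice n ∧
      cycleNorm b + cycleNorm (c - a) ≤
        max (cycleNorm a + cycleNorm (c - b)) (cycleNorm c + cycleNorm (b - a)) + cycleHypTwice n ∧
      cycleNorm c + cycleNorm (b - a) ≤
        max (cycleNorm a + cycleNorm (c - b)) (cycleNorm b + cycleNorm (c - a)) + cycleHypTwice n := by
  unfold cycleNorm cycleHypTwice
  rw [Fin.sub_val_of_le hbc, Fin.sub_val_of_le (hab.trans hbc), Fin.sub_val_of_le hab]
  rw [Fin.le_def] at hab hbc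
  have := c.isLt
  refine ⟨?_, ?_, ?_⟩ <;> split_ifs <;> omega

variable [NeZero n]

lemma cycleNorm_sub_comm (u v : Fin n) : cycleNorm (u - v) = cycleNorm (v - u) := by
  rw [← neg_sub, cycleNorm_neg]

lemma cycleNorm_fourPoint (a b c : Fin n) :
    cycleNorm a + cycleNorm (c - b) ≤
      max (cycleNorm b + cycleNorm (c - a)) (cycleNorm c + cycleNorm (b - a)) + cycleHypTwice n := by
  wlog hbc : b ≤ c generalizing b c
  · have := this c b (le_of_not_ge hbc)
    rwa [cycleNorm_sub_comm b c, max_comm] at this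
  rcases le_total a b with hab | hba
  · exact (cycleNorm_fourPoint_of_le hab hbc).1
  rcases le_total a c with hac | hca
  · have := (cycleNorm_fourPoint_of_le hba hac).2.1
    rwa [cycleNorm_sub_comm a b] at this
  · have := (cycleNorm_fourPoint_of_le hbc hca).2.2
    rwa [cycleNorm_sub_comm a c, cycleNorm_sub_comm a b] at this

lemma cycleGraph_dist_add_le (u k : Fin n) : (cycleGraph n).dist u (u + k) ≤ k.val := by
  obtain ⟨m, rfl⟩ : ∃ m, n = m + 1 := ⟨n - 1, by have := k.pos; omega⟩
  induction k using Fin.induction with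
  | zero => simp
  | succ i ih =>
    obtain ⟨l, rfl⟩ : ∃ l, m = l + 1 := ⟨m - 1, by have := i.pos; omega⟩
    have hadj : (cycleGraph (l + 2)).Adj (u + i.castSucc) (u + i.succ) := by
      rw [cycleGraph_adj, ← Fin.coeSucc_eq_succ, ← add_assoc]
      exact Or.inr (add_sub_cancel_left _ _)
    calc (cycleGraph (l + 2)).dist u (u + i.succ)
        ≤ (cycleGraph (l + 2)).dist u (u + i.castSucc) +
            (cycleGraph (l + 2)).dist (u + i.castSucc) (u + i.succ) :=
          cycleGraph_connected.dist_triangle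
      _ ≤ i.castSucc.val + 1 := add_le_add ih (dist_le hadj.toWalk)
      _ = i.succ.val := by simp

lemma cycleGraph_dist_le_cycleNorm (u v : Fin n) :
    (cycleGraph n).dist u v ≤ cycleNorm (v - u) := by
  have h := cycleGraph_dist_add_le u (v - u)
  have h' := cycleGraph_dist_add_le v (u - v)
  rw [add_sub_cancel] at h h'
  rw [dist_comm, ← neg_sub, Fin.val_neg'] at h'
  exact le_min h (h'.trans (Nat.mod_le _ _))

lemma cycleNorm_sub_le_length {u v : Fin n} (p : (cycleGraph n).Walk u v) :
    cycleNorm (v - u) ≤ p.length := by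
  induction p with
  | nil => simp [cycleNorm]
  | @cons u w v h p ih =>
    have hstep : cycleNorm (w - u) ≤ 1 := by
      rcases cycleGraph_adj'.mp h with h | h
      · rw [cycleNorm_sub_comm]; exact h ▸ cycleNorm_le_val _
      · exact h ▸ cycleNorm_le_val _
    calc cycleNorm (v - u) = cycleNorm ((v - w) + (w - u)) := by rw [sub_add_sub_cancel]
      _ ≤ p.length + 1 := (cycleNorm_add_le _ _).trans (add_le_add ih hstep)
      _ = _ := (Walk.length_cons _ _).symm

theorem cycleGraph_dist_eq_cycleNorm (u v : Fin n) :
    (cycleGraph n).dist u v = cycleNorm (v - u) := by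
  refine le_antisymm (cycleGraph_dist_le_cycleNorm u v) ?_
  obtain ⟨p, hp⟩ := (cycleGraph_preconnected u v).exists_walk_length_eq_dist
  exact hp ▸ cycleNorm_sub_le_length p

theorem cycleGraph_fourPoint (x y u v : Fin n) :
    (cycleGraph n).dist x y + (cycleGraph n).dist u v ≤
      max ((cycleGraph n).dist x u + (cycleGraph n).dist y v)
        ((cycleGraph n).dist x v + (cycleGraph n).dist y u) + cycleHypTwice n := by
  simp only [cycleGraph_dist_eq_cycleNorm]
  have := cycleNorm_fourPoint (y - x) (u - x) (v - x)
  rwa [sub_sub_sub_cancel_right, sub_sub_sub_cancel_right, sub_sub_sub_cancel_right] at this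

end

theorem exists_cycleGraph_fourPoint_eq (n : ℕ) [NeZero n] :
    ∃ x y u v : Fin n,
      (cycleGraph n).dist x y + (cycleGraph n).dist u v =
        max ((cycleGraph n).dist x u + (cycleGraph n).dist y v)
          ((cycleGraph n).dist x v + (cycleGraph n).dist y u) + cycleHypTwice n := by
  have hn := NeZero.pos n
  obtain ⟨y, hy⟩ : ∃ y : Fin n, y.val = 2 * n / 4 := ⟨⟨_, by omega⟩, rfl⟩
  obtain ⟨u, hu⟩ : ∃ u : Fin n, u.val = n / 4 := ⟨⟨_, by omega⟩, rfl⟩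
  obtain ⟨v, hv⟩ : ∃ v : Fin n, v.val = 3 * n / 4 := ⟨⟨_, by omega⟩, rfl⟩
  have huy : u ≤ y := Fin.le_def.mpr (by omega)
  have hyv : y ≤ v := Fin.le_def.mpr (by omega)
  refine ⟨0, y, u, v, ?_⟩
  rw [dist_comm (u := y) (v := u)]
  simp only [cycleGraph_dist_eq_cycleNorm, sub_zero]
  rw [cycleNorm_of_two_mul_le (k := y), cycleNorm_of_two_mul_le (k := u),
    cycleNorm_of_two_mul_le (k := v - y), cycleNorm_of_two_mul_le (k := y - u)]
  all_goals simp only [cycleNorm, Fin.sub_val_of_le huy, Fin.sub_val_of_le hyv,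
    Fin.sub_val_of_le (huy.trans hyv), hy, hu, hv, cycleHypTwice]
  · split_ifs <;> omega
  all_goals omega

/-- For `n ≥ 3`, the hyperbolicity of the `n`-cycle graph equals `⌊n/4⌋ - 1/2` when
`n ≡ 1 (mod 4)` and `⌊n/4⌋` otherwise: every quadruple of vertices satisfies the
four-point condition with defect `h(n) = cycleHypTwice n`, and some quadruple
attains this defect. -/
theorem cycleGraph_hyperbolicity (n : ℕ) (hn : 3 ≤ n) :
    (∀ x y u v : Fin n,
      (SimpleGraph.cycleGraph n).dist x y + (SimpleGraph.cycleGraph n).dist u v ≤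
        max ((SimpleGraph.cycleGraph n).dist x u + (SimpleGraph.cycleGraph n).dist y v)
          ((SimpleGraph.cycleGraph n).dist x v + (SimpleGraph.cycleGraph n).dist y u) +
          cycleHypTwice n) ∧
    (∃ x y u v : Fin n,
      (SimpleGraph.cycleGraph n).dist x y + (SimpleGraph.cycleGraph n).dist u v =
        max ((SimpleGraph.cycleGraph n).dist x u + (SimpleGraph.cycleGraph n).dist y v)
          ((SimpleGraph.cycleGraph n).dist x v + (SimpleGraph.cycleGraph n).dist y u) +
          cycleHypTwice n) := by
  have : NeZero n := ⟨by omega⟩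
  exact ⟨cycleGraph_fourPoint, exists_cycleGraph_fourPoint_eq n⟩
end

section
/- Let G₁ and G₂ be finite connected simple graphs, each with hyperbolicity 0 (i.e., for all vertices x, y, u, v of G_i, d(x,y) + d(u,v) ≤ max(d(x,u) + d(y,v), d(x,v) + d(y,u))), and let D₁ and D₂ be their diameters. Then the hyperbolicity of the Cartesian (box) product G₁ □ G₂ equals min(D₁, D₂): every quadruple of vertices x, y, u, v of G₁ □ G₂ satisfies d(x,y) + d(u,v) ≤ max(d(x,u) + d(y,v), d(x,v) + d(y,u)) + 2·min(D₁, D₂), and some quadruple attains equality. -/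
/-!
Distances in `G₁ □ G₂` add over the coordinates, so each side of the four-point condition
splits into a `G₁`-part and a `G₂`-part. Each part satisfies the condition with defect `0`,
and in part `i` the two competing pair sums lie in `[0, 2 Dᵢ]`; merging the two maxima into
one therefore costs at most `2 min(D₁, D₂)`. The rectangle spanned by diametral pairs
`a, b` of `G₁` and `c, d` of `G₂` attains this defect.
-/

lemma Nat.max_add_max_le_max_add_add_two_mul_min {a₁ b₁ a₂ b₂ D₁ D₂ : ℕ}
    (ha₁ : a₁ ≤ 2 * D₁) (hb₁ : b₁ ≤ 2 * D₁) (ha₂ : a₂ ≤ 2 * D₂) (hb₂ : b₂ ≤ 2 * D₂) :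
    max a₁ b₁ + max a₂ b₂ ≤ max (a₁ + a₂) (b₁ + b₂) + 2 * min D₁ D₂ := by
  omega

namespace SimpleGraph

variable {V₁ V₂ : Type*} {G₁ : SimpleGraph V₁} {G₂ : SimpleGraph V₂}

lemma dist_add_dist_le_two_mul {V : Type*} {G : SimpleGraph V} {D : ℕ}
    (hD : ∀ x y : V, G.dist x y ≤ D) (a b c d : V) : G.dist a b + G.dist c d ≤ 2 * D := by
  linarith [hD a b, hD c d]

lemma dist_boxProd_of_reachable {x y : V₁ × V₂} (h₁ : G₁.Reachable x.1 y.1)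
    (h₂ : G₂.Reachable x.2 y.2) :
    (G₁ □ G₂).dist x y = G₁.dist x.1 y.1 + G₂.dist x.2 y.2 := by
  have h : (G₁ □ G₂).Reachable x y := reachable_boxProd.2 ⟨h₁, h₂⟩
  have := edist_boxProd (G := G₁) (H := G₂) x y
  rw [← h.coe_dist_eq_edist, ← h₁.coe_dist_eq_edist, ← h₂.coe_dist_eq_edist] at this
  exact_mod_cast this

lemma Connected.dist_boxProd (hG₁ : G₁.Connected) (hG₂ : G₂.Connected) (x y : V₁ × V₂) :
    (G₁ □ G₂).dist x y = G₁.dist x.1 y.1 + G₂.dist x.2 y.2 :=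
  dist_boxProd_of_reachable (hG₁ x.1 y.1) (hG₂ x.2 y.2)

lemma Connected.boxProd_dist_add_dist_le (hG₁ : G₁.Connected) (hG₂ : G₂.Connected)
    (h₁ : ∀ x y u v : V₁,
      G₁.dist x y + G₁.dist u v ≤ max (G₁.dist x u + G₁.dist y v) (G₁.dist x v + G₁.dist y u))
    (h₂ : ∀ x y u v : V₂,
      G₂.dist x y + G₂.dist u v ≤ max (G₂.dist x u + G₂.dist y v) (G₂.dist x v + G₂.dist y u))
    {D₁ D₂ : ℕ} (hD₁ : ∀ x y : V₁, G₁.dist x y ≤ D₁) (hD₂ : ∀ x y : V₂, G₂.dist x y ≤ D₂)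
    (x y u v : V₁ × V₂) :
    (G₁ □ G₂).dist x y + (G₁ □ G₂).dist u v ≤
      max ((G₁ □ G₂).dist x u + (G₁ □ G₂).dist y v)
        ((G₁ □ G₂).dist x v + (G₁ □ G₂).dist y u) + 2 * min D₁ D₂ := by
  simp only [hG₁.dist_boxProd hG₂]
  have four_point := add_le_add (h₁ x.1 y.1 u.1 v.1) (h₂ x.2 y.2 u.2 v.2)
  have merge := Nat.max_add_max_le_max_add_add_two_mul_min
    (dist_add_dist_le_two_mul hD₁ x.1 u.1 y.1 v.1) (dist_add_dist_le_two_mul hD₁ x.1 v.1 y.1 u.1)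
    (dist_add_dist_le_two_mul hD₂ x.2 u.2 y.2 v.2) (dist_add_dist_le_two_mul hD₂ x.2 v.2 y.2 u.2)
  omega

lemma Connected.boxProd_dist_add_dist_rectangle (hG₁ : G₁.Connected) (hG₂ : G₂.Connected)
    (a b : V₁) (c d : V₂) :
    (G₁ □ G₂).dist (a, c) (b, d) + (G₁ □ G₂).dist (a, d) (b, c) =
      max ((G₁ □ G₂).dist (a, c) (a, d) + (G₁ □ G₂).dist (b, d) (b, c))
        ((G₁ □ G₂).dist (a, c) (b, c) + (G₁ □ G₂).dist (b, d) (a, d)) +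
        2 * min (G₁.dist a b) (G₂.dist c d) := by
  simp only [hG₁.dist_boxProd hG₂, dist_self, dist_comm (u := b) (v := a),
    dist_comm (u := d) (v := c)]
  omega

end SimpleGraph

theorem boxProd_hyperbolicity_general {V₁ V₂ : Type*}
    (G₁ : SimpleGraph V₁) (G₂ : SimpleGraph V₂)
    (hG₁ : G₁.Connected) (hG₂ : G₂.Connected)
    (h₁ : ∀ x y u v : V₁,
      G₁.dist x y + G₁.dist u v ≤
        max (G₁.dist x u + G₁.dist y v) (G₁.dist x v + G₁.dist y u))
    (h₂ : ∀ x y u v : V₂,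
      G₂.dist x y + G₂.dist u v ≤
        max (G₂.dist x u + G₂.dist y v) (G₂.dist x v + G₂.dist y u))
    (D₁ D₂ : ℕ)
    (hD₁ : (∀ x y : V₁, G₁.dist x y ≤ D₁) ∧ ∃ x y : V₁, G₁.dist x y = D₁)
    (hD₂ : (∀ x y : V₂, G₂.dist x y ≤ D₂) ∧ ∃ x y : V₂, G₂.dist x y = D₂) :
    (∀ x y u v : V₁ × V₂,
      (G₁.boxProd G₂).dist x y + (G₁.boxProd G₂).dist u v ≤
        max ((G₁.boxProd G₂).dist x u + (G₁.boxProd G₂).dist y v)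
          ((G₁.boxProd G₂).dist x v + (G₁.boxProd G₂).dist y u) + 2 * min D₁ D₂) ∧
    (∃ x y u v : V₁ × V₂,
      (G₁.boxProd G₂).dist x y + (G₁.boxProd G₂).dist u v =
        max ((G₁.boxProd G₂).dist x u + (G₁.boxProd G₂).dist y v)
          ((G₁.boxProd G₂).dist x v + (G₁.boxProd G₂).dist y u) + 2 * min D₁ D₂) := by
  obtain ⟨hD₁_le, a, b, rfl⟩ := hD₁
  obtain ⟨hD₂_le, c, d, rfl⟩ := hD₂
  exact ⟨hG₁.boxProd_dist_add_dist_le hG₂ h₁ h₂ hD₁_le hD₂_le,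
    (a, c), (b, d), (a, d), (b, c), hG₁.boxProd_dist_add_dist_rectangle hG₂ a b c d⟩

/-- Let `G₁`, `G₂` be finite connected graphs of hyperbolicity `0` with diameters
`D₁`, `D₂`. Then the hyperbolicity of the box product `G₁ □ G₂` equals
`min(D₁, D₂)`: every quadruple satisfies the four-point condition with defect
`2 · min(D₁, D₂)`, and some quadruple attains it. -/
theorem boxProd_hyperbolicity {V₁ V₂ : Type*} [Fintype V₁] [Fintype V₂]
    (G₁ : SimpleGraph V₁) (G₂ : SimpleGraph V₂)
    (hG₁ : G₁.Connected) (hG₂ : G₂.Connected)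
    (h₁ : ∀ x y u v : V₁,
      G₁.dist x y + G₁.dist u v ≤
        max (G₁.dist x u + G₁.dist y v) (G₁.dist x v + G₁.dist y u))
    (h₂ : ∀ x y u v : V₂,
      G₂.dist x y + G₂.dist u v ≤
        max (G₂.dist x u + G₂.dist y v) (G₂.dist x v + G₂.dist y u))
    (D₁ D₂ : ℕ)
    (hD₁ : (∀ x y : V₁, G₁.dist x y ≤ D₁) ∧ ∃ x y : V₁, G₁.dist x y = D₁)
    (hD₂ : (∀ x y : V₂, G₂.dist x y ≤ D₂) ∧ ∃ x y : V₂, G₂.dist x y = D₂) :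
    (∀ x y u v : V₁ × V₂,
      (G₁.boxProd G₂).dist x y + (G₁.boxProd G₂).dist u v ≤
        max ((G₁.boxProd G₂).dist x u + (G₁.boxProd G₂).dist y v)
          ((G₁.boxProd G₂).dist x v + (G₁.boxProd G₂).dist y u) + 2 * min D₁ D₂) ∧
    (∃ x y u v : V₁ × V₂,
      (G₁.boxProd G₂).dist x y + (G₁.boxProd G₂).dist u v =
        max ((G₁.boxProd G₂).dist x u + (G₁.boxProd G₂).dist y v)
          ((G₁.boxProd G₂).dist x v + (G₁.boxProd G₂).dist y u) + 2 * min D₁ D₂) :=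
  boxProd_hyperbolicity_general G₁ G₂ hG₁ hG₂ h₁ h₂ D₁ D₂ hD₁ hD₂
end

section
/- Let G be a connected simple graph and k a positive integer. Suppose the tree-length of G is at most k, i.e., there exists a chordal graph H on the same vertex set with E(G) ⊆ E(H) such that d_G(u,v) ≤ k for every edge {u,v} of H. Then G is k-hyperbolic: for all vertices x, y, u, v, d_G(x,y) + d_G(u,v) ≤ max(d_G(x,u) + d_G(y,v), d_G(x,v) + d_G(y,u)) + 2k. -/
/-!
Let `F` be the finite union of geodesics of `G` from `x` to `u`, `y` to `v`, `x` to `v` and `y`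
to `u`. A finite vertex set of a chordal graph that is not a clique has two non-adjacent simplicial
vertices (Dirac), so `F` can be dismantled one simplicial vertex at a time. Along this elimination
one finds a clique `Q` of `H` that, for one of the pairings `{x, u}, {y, v}` or `{x, v}, {y, u}`,
meets every walk inside `F` joining either pair: the four-point property of a clique tree, `Q`
being the bag where the two tree paths meet. The two corresponding geodesics pass through points
`p, q ∈ Q`, and `d_G(p, q) ≤ k` because `p` and `q` are adjacent in `H`; the triangle inequality
through `p` and `q` gives the bound.
-/
/-- A graph is chordal if it has no induced cycle of length `4` or more. -/
def IsChordalGraph {V : Type*} (H : SimpleGraph V) : Prop :=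
  ∀ n : ℕ, 4 ≤ n → IsEmpty (SimpleGraph.cycleGraph n ↪g H)

@[elab_as_elim]
theorem Set.Finite.ssubset_induction {α : Type*} {P : Set α → Prop} {F : Set α} (hF : F.Finite)
    (step : ∀ F : Set α, F.Finite → (∀ F' ⊂ F, P F') → P F) : P F := by
  induction h : F.ncard using Nat.strong_induction_on generalizing F with
  | _ n ih =>
    exact step F hF fun F' hF' =>
      ih _ (h ▸ Set.ncard_lt_ncard hF' hF) (hF.subset hF'.subset) rfl

namespace SimpleGraph

variable {V : Type*} {H : SimpleGraph V}

def ReachableIn (H : SimpleGraph V) (E : Set V) (a b : V) : Prop :=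
  ∃ p : H.Walk a b, ∀ x ∈ p.support, x ∈ E

namespace ReachableIn

variable {E E' : Set V} {a b c : V}

theorem left_mem (h : H.ReachableIn E a b) : a ∈ E :=
  h.elim fun p hp => hp a p.start_mem_support

theorem right_mem (h : H.ReachableIn E a b) : b ∈ E :=
  h.elim fun p hp => hp b p.end_mem_support

theorem refl (ha : a ∈ E) : H.ReachableIn E a a :=
  ⟨.nil, by simpa using ha⟩

theorem symm (h : H.ReachableIn E a b) : H.ReachableIn E b a :=
  h.elim fun p hp => ⟨p.reverse, by simpa using hp⟩

theorem trans (h₁ : H.ReachableIn E a b) (h₂ : H.ReachableIn E b c) : H.ReachableIn E a c := by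
  obtain ⟨p, hp⟩ := h₁
  obtain ⟨q, hq⟩ := h₂
  exact ⟨p.append q, fun x hx => (Walk.mem_support_append_iff p q).1 hx |>.elim (hp x) (hq x)⟩

theorem mono (h : H.ReachableIn E a b) (hE : E ⊆ E') : H.ReachableIn E' a b :=
  h.elim fun p hp => ⟨p, fun x hx => hE (hp x hx)⟩

theorem exists_adj (h : H.ReachableIn E a c) (hne : a ≠ c) :
    ∃ b, H.Adj a b ∧ H.ReachableIn E b c := by
  obtain ⟨_ | ⟨hab, p⟩, hp⟩ := h
  · exact absurd rfl hne
  · exact ⟨_, hab, p, fun x hx => hp x (List.mem_cons_of_mem _ hx)⟩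

theorem reachableIn_setOf (h : H.ReachableIn E a b) :
    H.ReachableIn {x | H.ReachableIn E a x} a b := by
  classical
  obtain ⟨p, hp⟩ := h
  exact ⟨p, fun x hx =>
    ⟨p.takeUntil x hx, fun y hy => hp y (p.support_takeUntil_subset_support hx hy)⟩⟩

theorem mem_of_closed {X : Set V} (hX : ∀ x ∈ X, ∀ y ∈ E, H.Adj x y → y ∈ X)
    (h : H.ReachableIn E a b) (ha : a ∈ X) : b ∈ X := by
  obtain ⟨p, hp⟩ := h
  induction p with
  | nil => exact ha
  | cons hadj p ih =>
    exact ih (hX _ ha _ (hp _ (List.mem_cons_of_mem _ p.start_mem_support)) hadj)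
      fun x hx => hp x (List.mem_cons_of_mem _ hx)

end ReachableIn

theorem Adj.reachableIn {E : Set V} {a b : V} (h : H.Adj a b) (ha : a ∈ E) (hb : b ∈ E) :
    H.ReachableIn E a b :=
  ⟨h.toWalk, by simp [ha, hb]⟩

def IsSimplicialIn (H : SimpleGraph V) (F : Set V) (s : V) : Prop :=
  H.IsClique (F ∩ H.neighborSet s)

theorem IsSimplicialIn.anti {F F' : Set V} {s : V} (h : H.IsSimplicialIn F s) (hF : F' ⊆ F) :
    H.IsSimplicialIn F' s :=
  IsClique.subset (Set.inter_subset_inter_left _ hF) h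

theorem ReachableIn.diff_singleton {E : Set V} {s a c : V}
    (hs : H.IsSimplicialIn E s) (h : H.ReachableIn E a c) (ha : a ≠ s)
    (hc : c ≠ s) : H.ReachableIn (E \ {s}) a c := by
  -- `x` stands in for the start `a` of the walk: `x = a`, or `a = s` and `x` is a neighbour of
  -- `s`; two neighbours of the simplicial vertex `s` are adjacent, so `s` can be bypassed
  suffices key : ∀ {a} (p : H.Walk a c), (∀ y ∈ p.support, y ∈ E) → ∀ x ∈ E, x ≠ s →
      (x = a ∨ a = s ∧ H.Adj s x) → H.ReachableIn (E \ {s}) x c from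
    h.elim fun p hp => key p hp a h.left_mem ha (.inl rfl)
  clear h ha
  intro a p
  induction p with
  | nil =>
    rintro - x hxE hxs (rfl | ⟨rfl, -⟩)
    exacts [.refl ⟨hxE, hxs⟩, absurd rfl hc]
  | @cons a b _ hab p ih =>
    intro hp x hxE hxs hx
    have hpE : ∀ y ∈ p.support, y ∈ E := fun y hy => hp y (List.mem_cons_of_mem _ hy)
    have hbE : b ∈ E := hpE b p.start_mem_support
    by_cases hbs : b = s
    · subst hbs
      obtain rfl | ⟨rfl, -⟩ := hx
      · exact ih hc hpE x hxE hxs (.inr ⟨rfl, hab.symm⟩)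
      · exact absurd hab H.irrefl
    refine ReachableIn.trans ?_ (ih hc hpE b hbE hbs (.inl rfl))
    by_cases hxb : x = b
    · exact hxb ▸ .refl ⟨hxE, hxs⟩
    obtain rfl | ⟨rfl, hax⟩ := hx
    · exact hab.reachableIn ⟨hxE, hxs⟩ ⟨hbE, hbs⟩
    · exact (hs ⟨hxE, hax⟩ ⟨hbE, hab⟩ hxb).reachableIn ⟨hxE, hxs⟩ ⟨hbE, hbs⟩

theorem cycleGraph_adj_iff_val_s8 {n : ℕ} {u v : Fin (n + 2)} :
    (cycleGraph (n + 2)).Adj u v ↔ u.val + 1 = v.val ∨ v.val + 1 = u.val ∨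
      (u.val = 0 ∧ v.val = n + 1) ∨ (v.val = 0 ∧ u.val = n + 1) := by
  have hu := u.is_lt
  have hv := v.is_lt
  rw [cycleGraph_adj']
  rcases lt_trichotomy u v with h | rfl | h
  · rw [Fin.coe_sub_iff_lt.2 h, Fin.coe_sub_iff_le.2 h.le]
    have := Fin.lt_def.1 h
    omega
  · simp only [sub_self, Fin.val_zero]
    omega
  · rw [Fin.coe_sub_iff_lt.2 h, Fin.coe_sub_iff_le.2 h.le]
    have := Fin.lt_def.1 h
    omega

theorem Walk.sub_le_length_of_minimal {E : Set V} {s t : V} (p : H.Walk s t)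
    (hp : ∀ x ∈ p.support, x ∈ E)
    (hmin : ∀ q : H.Walk s t, (∀ x ∈ q.support, x ∈ E) → p.length ≤ q.length)
    {i j : ℕ} (hij : i ≤ j) (hj : j ≤ p.length) (q : H.Walk (p.getVert i) (p.getVert j))
    (hq : ∀ x ∈ q.support, x ∈ E) : j - i ≤ q.length := by
  have := hmin (((p.take i).append q).append (p.drop j)) fun x hx => by
    simp only [Walk.mem_support_append_iff, Walk.support_take,
      Walk.drop_support_eq_support_drop_min] at hx
    rcases hx with (hx | hx) | hx
    exacts [hp x (List.mem_of_mem_take hx), hq x hx, hp x (List.mem_of_mem_drop hx)]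
  simp only [Walk.length_append, Walk.take_length, Walk.drop_length] at this
  omega

theorem ReachableIn.exists_pathGraph_embedding {E : Set V} {s t : V}
    (h : H.ReachableIn E s t) :
    ∃ n, ∃ e : pathGraph (n + 1) ↪g H, e 0 = s ∧ e (Fin.last n) = t ∧ ∀ i, e i ∈ E := by
  classical
  have hex : ∃ n, ∃ p : H.Walk s t, (∀ x ∈ p.support, x ∈ E) ∧ p.length = n :=
    h.elim fun p hp => ⟨_, p, hp, rfl⟩
  obtain ⟨p, hp, hlen⟩ := Nat.find_spec hex
  have hmin : ∀ q : H.Walk s t, (∀ x ∈ q.support, x ∈ E) → p.length ≤ q.length :=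
    fun q hq => hlen ▸ Nat.find_min' hex ⟨q, hq, rfl⟩
  have hinj : ∀ i j, i ≤ j → j ≤ p.length → p.getVert i = p.getVert j → i = j :=
    fun i j hij hj heq => by
      have := p.sub_le_length_of_minimal hp hmin hij hj (Walk.nil.copy rfl heq)
        (by simpa using hp _ (p.getVert_mem_support i))
      simp at this
      omega
  have hadj : ∀ i j, i ≤ j → j ≤ p.length → H.Adj (p.getVert i) (p.getVert j) → j = i + 1 :=
    fun i j hij hj hadj => by
      have hle := p.sub_le_length_of_minimal hp hmin hij hj hadj.toWalk
        (by simp [hp _ (p.getVert_mem_support _)])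
      have hne : i ≠ j := fun h => hadj.ne (h ▸ rfl)
      simp only [Walk.length_cons, Walk.length_nil] at hle
      omega
  refine ⟨p.length, ⟨⟨fun i => p.getVert i, fun i j hij => ?_⟩, fun {i j} => ?_⟩,
    p.getVert_zero, p.getVert_length, fun i => hp _ (p.getVert_mem_support _)⟩
  · have hi := i.is_le
    have hj := j.is_le
    rcases le_total i j with h | h
    · exact Fin.ext (hinj _ _ h hj hij)
    · exact Fin.ext (hinj _ _ h hi hij.symm).symm
  · change H.Adj (p.getVert i) (p.getVert j) ↔ _
    rw [pathGraph_adj]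
    have hi := i.is_le
    have hj := j.is_le
    constructor
    · intro h
      rcases le_total i j with hij | hij
      · exact .inl (hadj _ _ hij hj h).symm
      · exact .inr (hadj _ _ hij hi h.symm).symm
    · rintro (h | h)
      · exact h ▸ p.adj_getVert_succ (by omega)
      · exact (h ▸ p.adj_getVert_succ (by omega) :).symm

theorem exists_isSimplicialIn_of_isClique_boundary {F X S : Set V} {x : V} (hx : x ∈ X)
    (hS : H.IsClique S) (hX : ∀ v ∈ X, F ∩ H.neighborSet v ⊆ X ∪ S)
    (hXS : H.IsClique (X ∪ S) ∨ ∃ s₁ ∈ X ∪ S, ∃ s₂ ∈ X ∪ S, s₁ ≠ s₂ ∧ ¬H.Adj s₁ s₂ ∧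
      H.IsSimplicialIn (X ∪ S) s₁ ∧ H.IsSimplicialIn (X ∪ S) s₂) :
    ∃ σ ∈ X, H.IsSimplicialIn F σ := by
  obtain hXS | ⟨s₁, h₁, s₂, h₂, hne, hnadj, hs₁, hs₂⟩ := hXS
  · exact ⟨x, hx, hXS.subset (hX x hx)⟩
  obtain ⟨σ, hσ, hσX⟩ : ∃ σ ∈ X, H.IsSimplicialIn (X ∪ S) σ := by
    rcases h₁ with h₁ | h₁
    · exact ⟨s₁, h₁, hs₁⟩
    rcases h₂ with h₂ | h₂
    · exact ⟨s₂, h₂, hs₂⟩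
    · exact absurd (hS h₁ h₂ hne) hnadj
  exact ⟨σ, hσ, IsClique.subset (s := (X ∪ S) ∩ H.neighborSet σ)
    (fun y hy => ⟨hX σ hσ hy, hy.2⟩) hσX⟩

def Separates (H : SimpleGraph V) (F Q A C : Set V) : Prop :=
  ∀ a ∈ A, ∀ c ∈ C, ¬H.ReachableIn (F \ Q) a c

namespace Separates

variable {F Q A C : Set V}

theorem symm (h : H.Separates F Q A C) : H.Separates F Q C A :=
  fun c hc a ha hca => h a ha c hc hca.symm

theorem of_inter_subset (h : A ∩ F ⊆ Q) : H.Separates F Q A C :=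
  fun _ ha _ _ hac => hac.left_mem.2 (h ⟨ha, hac.left_mem.1⟩)

theorem exists_mem_support {a c : V} (h : H.Separates F Q {a} {c}) (p : H.Walk a c)
    (hp : ∀ x ∈ p.support, x ∈ F) : ∃ x ∈ p.support, x ∈ Q := by
  by_contra! hpQ
  exact h a rfl c rfl ⟨p, fun x hx => ⟨hp x hx, hpQ x hx⟩⟩

end Separates

theorem separates_insert_inter_neighborSet {F A C : Set V} {s : V} (hA : H.IsClique A)
    (hC : H.IsClique C) (hs : s ∈ A ∨ s ∈ C) :
    H.Separates F (insert s (F ∩ H.neighborSet s)) A C := by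
  have key : ∀ {X}, H.IsClique X → s ∈ X → X ∩ F ⊆ insert s (F ∩ H.neighborSet s) :=
    fun hX hsX x ⟨hx, hxF⟩ => or_iff_not_imp_left.2 fun hxs => ⟨hxF, hX hsX hx (Ne.symm hxs)⟩
  rcases hs with hs | hs
  exacts [.of_inter_subset (key hA hs), (Separates.of_inter_subset (key hC hs)).symm]

open Classical in
theorem ReachableIn.exists_start_ne_of_isClique {E F X : Set V} {s a c : V} (hEF : E ⊆ F)
    (hX : H.IsClique X) (ha : a ∈ X) (h : H.ReachableIn E a c) (hc : c ≠ s) :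
    ∃ a' ∈ (if s ∈ X then F ∩ H.neighborSet s else X), a' ≠ s ∧ H.ReachableIn E a' c := by
  split_ifs with hsX
  · by_cases has : a = s
    · subst has
      obtain ⟨b, hab, hbc⟩ := h.exists_adj (Ne.symm hc)
      exact ⟨b, ⟨hEF hbc.left_mem, hab⟩, hab.ne', hbc⟩
    · exact ⟨a, ⟨hEF h.left_mem, hX hsX ha (Ne.symm has)⟩, has, h⟩
  · exact ⟨a, ha, fun has => hsX (has ▸ ha), h⟩

open Classical in
theorem Separates.of_diff_singleton {F Q X Y : Set V} {s : V} (hs : H.IsSimplicialIn F s)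
    (hX : H.IsClique X) (hY : H.IsClique Y) (hXY : s ∉ X ∨ s ∉ Y)
    (h : H.Separates (F \ {s}) Q (if s ∈ X then F ∩ H.neighborSet s else X)
      (if s ∈ Y then F ∩ H.neighborSet s else Y)) :
    H.Separates F Q X Y := by
  have hsE : H.IsSimplicialIn (F \ Q) s := hs.anti Set.sdiff_subset
  have hdiff : (F \ Q) \ {s} = (F \ {s}) \ Q := Set.sdiff_sdiff_comm
  intro a ha c hc hac
  rcases hXY with hsX | hsY
  · have has : a ≠ s := fun h => hsX (h ▸ ha)
    obtain ⟨c', hc', hc's, hc'a⟩ := hac.symm.exists_start_ne_of_isClique Set.sdiff_subset hY hc has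
    exact h a (by rwa [if_neg hsX]) c' hc' (hdiff ▸ (hc'a.diff_singleton hsE hc's has).symm)
  · have hcs : c ≠ s := fun h => hsY (h ▸ hc)
    obtain ⟨a', ha', ha's, ha'c⟩ := hac.exists_start_ne_of_isClique Set.sdiff_subset hX ha hcs
    exact h a' ha' c (by rwa [if_neg hsY]) (hdiff ▸ ha'c.diff_singleton hsE ha's hcs)

theorem Walk.dist_add_dist_le_length {G : SimpleGraph V} {a c x : V} (p : G.Walk a c)
    (hx : x ∈ p.support) : G.dist a x + G.dist x c ≤ p.length := by
  classical
  have := congrArg Walk.length (p.take_spec hx)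
  rw [Walk.length_append] at this
  exact this ▸ add_le_add (dist_le _) (dist_le _)

theorem Connected.dist_add_dist_le_of_mem_support {G : SimpleGraph V} (hG : G.Connected)
    {x y u v p q : V} {p₁ : G.Walk x u} {p₂ : G.Walk y v} (h₁ : p₁.length = G.dist x u)
    (h₂ : p₂.length = G.dist y v) (hp : p ∈ p₁.support) (hq : q ∈ p₂.support) :
    G.dist x y + G.dist u v ≤ G.dist x u + G.dist y v + 2 * G.dist p q := by
  have hxu := p₁.dist_add_dist_le_length hp
  have hyv := p₂.dist_add_dist_le_length hq
  have hxy := hG.dist_triangle (u := x) (v := p) (w := y)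
  have hpy := hG.dist_triangle (u := p) (v := q) (w := y)
  have huv := hG.dist_triangle (u := u) (v := p) (w := v)
  have hpv := hG.dist_triangle (u := p) (v := q) (w := v)
  have hup : G.dist u p = G.dist p u := dist_comm
  have hqy : G.dist q y = G.dist y q := dist_comm
  omega

theorem Separates.dist_add_dist_le {G : SimpleGraph V} (hG : G.Connected) (hle : G ≤ H)
    {F Q : Set V} {k : ℕ} (hQ : ∀ p ∈ Q, ∀ q ∈ Q, G.dist p q ≤ k) {x y u v : V}
    {p₁ : G.Walk x u} {p₂ : G.Walk y v} (h₁ : p₁.length = G.dist x u)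
    (h₂ : p₂.length = G.dist y v) (hp₁ : ∀ z ∈ p₁.support, z ∈ F)
    (hp₂ : ∀ z ∈ p₂.support, z ∈ F) (hs₁ : H.Separates F Q {x} {u})
    (hs₂ : H.Separates F Q {y} {v}) :
    G.dist x y + G.dist u v ≤ G.dist x u + G.dist y v + 2 * k := by
  obtain ⟨p, hp, hpQ⟩ := hs₁.exists_mem_support (p₁.mapLe hle) (by simpa using hp₁)
  obtain ⟨q, hq, hqQ⟩ := hs₂.exists_mem_support (p₂.mapLe hle) (by simpa using hp₂)
  rw [Walk.support_mapLe_eq_support] at hp hq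
  have := hG.dist_add_dist_le_of_mem_support h₁ h₂ hp hq
  have := hQ p hpQ q hqQ
  omega

end SimpleGraph

open SimpleGraph

namespace IsChordalGraph

variable {V : Type*} {H : SimpleGraph V}

theorem exists_adj_of_pathGraph_embedding (hH : IsChordalGraph H) {n : ℕ}
    (e : pathGraph (n + 3) ↪g H) {b : V} (hb : b ∉ Set.range e) (h₀ : H.Adj (e 0) b)
    (h₁ : H.Adj (e (Fin.last _)) b) : ∃ i, i ≠ 0 ∧ i ≠ Fin.last _ ∧ H.Adj (e i) b := by
  by_contra! hno
  have hadj_b : ∀ i, H.Adj (e i) b ↔ (i : ℕ) = 0 ∨ (i : ℕ) = n + 2 := fun i => by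
    refine ⟨fun h => ?_, fun h => ?_⟩
    · by_contra! hi
      exact hno i (fun h => hi.1 (by simp [h])) (fun h => hi.2 (by simp [h])) h
    · rcases h with h | h
      · exact (Fin.ext h : i = 0) ▸ h₀
      · exact (Fin.ext h : i = Fin.last _) ▸ h₁
  -- closing the induced path through `b` gives an induced cycle of length `n + 4`
  let f : Fin (n + 3 + 1) → V := Fin.lastCases b e
  refine (hH (n + 3 + 1) (by omega)).false ⟨⟨f, fun i j hij => ?_⟩, fun {i j} => ?_⟩
  · induction i using Fin.lastCases <;> induction j using Fin.lastCases <;>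
      simp only [f, Fin.lastCases_last, Fin.lastCases_castSucc] at hij
    · rfl
    · exact absurd ⟨_, hij.symm⟩ hb
    · exact absurd ⟨_, hij⟩ hb
    · rw [e.injective hij]
  · change H.Adj (f i) (f j) ↔ _
    rw [cycleGraph_adj_iff_val_s8]
    induction i using Fin.lastCases <;> induction j using Fin.lastCases <;>
      simp only [f, Fin.lastCases_last, Fin.lastCases_castSucc, Fin.val_last,
        Fin.val_castSucc, H.adj_comm b, hadj_b, e.map_adj_iff, pathGraph_adj, H.irrefl] <;>
      grind

theorem adj_of_reachableIn (hH : IsChordalGraph H) {D : Set V} {s t b : V} (hst : s ≠ t)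
    (h : H.ReachableIn (insert s (insert t D)) s t) (hsb : H.Adj s b) (htb : H.Adj t b)
    (hD : Disjoint D (insert b (H.neighborSet b))) : H.Adj s t := by
  obtain ⟨_ | _ | n, e, rfl, rfl, heD⟩ := h.exists_pathGraph_embedding
  · exact absurd rfl hst
  · exact e.map_adj_iff.2 (by simp [pathGraph_adj])
  have hb : b ∉ Set.range e := by
    rintro ⟨i, rfl⟩
    rcases heD i with h | h | h
    · exact H.irrefl (h ▸ hsb)
    · exact H.irrefl (h ▸ htb)
    · exact hD.notMem_of_mem_left h (Set.mem_insert _ _)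
  obtain ⟨i, hi₀, hiₙ, hib⟩ := hH.exists_adj_of_pathGraph_embedding e hb hsb htb
  rcases heD i with h | h | h
  · exact absurd (e.injective h) hi₀
  · exact absurd (e.injective h) hiₙ
  · exact absurd (Set.mem_insert_of_mem _ hib.symm) (hD.notMem_of_mem_left h)

theorem isClique_boundary (hH : IsChordalGraph H) {D S : Set V} {b : V}
    (hD : ∀ d₁ ∈ D, ∀ d₂ ∈ D, H.ReachableIn D d₁ d₂)
    (hbD : Disjoint D (insert b (H.neighborSet b)))
    (hS : ∀ s ∈ S, H.Adj s b ∧ ∃ d ∈ D, H.Adj s d) : H.IsClique S := by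
  intro s hs t ht hst
  obtain ⟨hsb, d₁, hd₁, hsd₁⟩ := hS s hs
  obtain ⟨htb, d₂, hd₂, htd₂⟩ := hS t ht
  have hsub : D ⊆ insert s (insert t D) := fun x hx => .inr (.inr hx)
  refine hH.adj_of_reachableIn hst ?_ hsb htb hbD
  exact (hsd₁.reachableIn (.inl rfl) (hsub hd₁)).trans
    (((hD d₁ hd₁ d₂ hd₂).mono hsub).trans (htd₂.symm.reachableIn (hsub hd₂) (.inr (.inl rfl))))

theorem isClique_or_exists_isSimplicialIn (hH : IsChordalGraph H) {F : Set V}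
    (hF : F.Finite) :
    H.IsClique F ∨ ∃ s₁ ∈ F, ∃ s₂ ∈ F, s₁ ≠ s₂ ∧ ¬H.Adj s₁ s₂ ∧
      H.IsSimplicialIn F s₁ ∧ H.IsSimplicialIn F s₂ := by
  refine hF.ssubset_induction fun F hF ih => ?_
  by_cases hFcl : H.IsClique F
  · exact .inl hFcl
  obtain ⟨a, ha, b, hb, hab, hnab⟩ : ∃ a ∈ F, ∃ b ∈ F, a ≠ b ∧ ¬H.Adj a b := by
    simpa [IsClique, Set.Pairwise] using hFcl
  -- `S`, the boundary of the component `D` of `a` outside the closed neighbourhood of `b`,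
  -- is a clique separating `D` from the component `C` of `b` outside `S`
  set D := {v | H.ReachableIn (F \ insert b (H.neighborSet b)) a v}
  set S := {v | v ∈ F ∧ v ∉ D ∧ ∃ d ∈ D, H.Adj v d}
  set C := {v | H.ReachableIn (F \ S) b v}
  have hDF : D ⊆ F \ insert b (H.neighborSet b) := fun v hv => hv.right_mem
  have haD : a ∈ D := .refl ⟨ha, by simp [hab, H.adj_comm, hnab]⟩
  have hbS : b ∉ S := fun ⟨_, _, d, hd, hbd⟩ => (hDF hd).2 (.inr hbd)
  have hbC : b ∈ C := .refl ⟨hb, hbS⟩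
  have hSb : ∀ v ∈ S, H.Adj v b := by
    rintro v ⟨hvF, hvD, d, hd, hvd⟩
    by_contra hvb
    have hv : v ∉ insert b (H.neighborSet b) := by
      rintro (rfl | hv)
      exacts [(hDF hd).2 (.inr hvd), hvb hv.symm]
    exact hvD (hd.trans (hvd.symm.reachableIn (hDF hd) ⟨hvF, hv⟩))
  have hS : H.IsClique S := by
    refine hH.isClique_boundary (b := b) (D := D) (fun d₁ h₁ d₂ h₂ => ?_) ?_
      fun v hv => ⟨hSb v hv, hv.2.2⟩
    · exact h₁.reachableIn_setOf.symm.trans h₂.reachableIn_setOf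
    · exact Set.disjoint_left.2 fun v hv => (hDF hv).2
  have hDS : ∀ v ∈ D, F ∩ H.neighborSet v ⊆ D ∪ S := fun v hv w ⟨hwF, hvw⟩ =>
    or_iff_not_imp_left.2 fun hwD => ⟨hwF, hwD, v, hv, hvw.symm⟩
  have hCS : ∀ v ∈ C, F ∩ H.neighborSet v ⊆ C ∪ S := fun v hv w ⟨hwF, hvw⟩ =>
    or_iff_not_imp_right.2 fun hwS =>
      ReachableIn.trans hv (hvw.reachableIn hv.right_mem ⟨hwF, hwS⟩)
  have hD_closed : ∀ x ∈ D, ∀ y ∈ F \ S, H.Adj x y → y ∈ D := fun x hx y ⟨hyF, hyS⟩ hxy =>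
    by_contra fun hyD => hyS ⟨hyF, hyD, x, hx, hxy.symm⟩
  have hCD : ∀ v ∈ C, v ∉ D := fun v hvC hvD =>
    (hDF (ReachableIn.mem_of_closed hD_closed (ReachableIn.symm hvC) hvD)).2 (.inl rfl)
  have hSF : S ⊆ F := fun v hv => hv.1
  obtain ⟨sa, hsaD, hsa⟩ := exists_isSimplicialIn_of_isClique_boundary haD hS hDS <|
    ih _ <| (Set.ssubset_iff_of_subset (Set.union_subset (fun v hv => (hDF hv).1) hSF)).2
      ⟨b, hb, by rintro (h | h); exacts [(hDF h).2 (.inl rfl), hbS h]⟩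
  obtain ⟨sb, hsbC, hsb⟩ := exists_isSimplicialIn_of_isClique_boundary hbC hS hCS <|
    ih _ <| (Set.ssubset_iff_of_subset (Set.union_subset (fun v hv => hv.right_mem.1) hSF)).2
      ⟨a, ha, by rintro (h | h); exacts [hCD a h haD, h.2.1 haD]⟩
  refine .inr ⟨sa, (hDF hsaD).1, sb, hsbC.right_mem.1, fun h => hCD sb hsbC (h ▸ hsaD),
    fun hadj => ?_, hsa, hsb⟩
  rcases hDS sa hsaD ⟨hsbC.right_mem.1, hadj⟩ with h | h
  exacts [hCD sb hsbC h, hsbC.right_mem.2 h]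

theorem exists_isClique_separates (hH : IsChordalGraph H) {F : Set V} (hF : F.Finite)
    {A B C D : Set V} (hA : H.IsClique A) (hB : H.IsClique B) (hC : H.IsClique C)
    (hD : H.IsClique D) :
    ∃ Q, H.IsClique Q ∧ (H.Separates F Q A C ∧ H.Separates F Q B D ∨
      H.Separates F Q A D ∧ H.Separates F Q B C) := by
  classical
  revert A B C D
  show ∀ A B C D : Set V, _
  refine hF.ssubset_induction fun F hF ih => ?_
  intro A B C D hA hB hC hD
  rcases hH.isClique_or_exists_isSimplicialIn hF with hFcl | ⟨s, hsF, -, -, -, -, hs, -⟩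
  · exact ⟨F, hFcl, .inl ⟨.of_inter_subset Set.inter_subset_right,
      .of_inter_subset Set.inter_subset_right⟩⟩
  have hQ₀ : H.IsClique (insert s (F ∩ H.neighborSet s)) :=
    isClique_insert.2 ⟨hs, fun _ hb _ => hb.2⟩
  by_cases h₁ : (s ∈ A ∨ s ∈ D) ∧ (s ∈ B ∨ s ∈ C)
  · exact ⟨_, hQ₀, .inr ⟨separates_insert_inter_neighborSet hA hD h₁.1,
      separates_insert_inter_neighborSet hB hC h₁.2⟩⟩
  by_cases h₂ : (s ∈ A ∨ s ∈ C) ∧ (s ∈ B ∨ s ∈ D)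
  · exact ⟨_, hQ₀, .inl ⟨separates_insert_inter_neighborSet hA hC h₂.1,
      separates_insert_inter_neighborSet hB hD h₂.2⟩⟩
  have hite : ∀ {X}, H.IsClique X → H.IsClique (if s ∈ X then F ∩ H.neighborSet s else X) :=
    fun hX => by split_ifs; exacts [hs, hX]
  obtain ⟨Q, hQ, hsep⟩ := ih (F \ {s}) (Set.sdiff_singleton_ssubset.2 hsF)
    _ _ _ _ (hite hA) (hite hB) (hite hC) (hite hD)
  refine ⟨Q, hQ, hsep.imp (And.imp ?_ ?_) (And.imp ?_ ?_)⟩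
  exacts [.of_diff_singleton hs hA hC (by tauto), .of_diff_singleton hs hB hD (by tauto),
    .of_diff_singleton hs hA hD (by tauto), .of_diff_singleton hs hB hC (by tauto)]

end IsChordalGraph

theorem hyperbolic_of_treeLength_general {V : Type*} (G : SimpleGraph V) (hG : G.Connected)
    (k : ℕ) (H : SimpleGraph V) (hH : IsChordalGraph H) (hle : G ≤ H)
    (hdist : ∀ u v : V, H.Adj u v → G.dist u v ≤ k) :
    ∀ x y u v : V,
      G.dist x y + G.dist u v ≤
        max (G.dist x u + G.dist y v) (G.dist x v + G.dist y u) + 2 * k := by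
  intro x y u v
  obtain ⟨pxu, hxu⟩ := hG.exists_walk_length_eq_dist x u
  obtain ⟨pyv, hyv⟩ := hG.exists_walk_length_eq_dist y v
  obtain ⟨pxv, hxv⟩ := hG.exists_walk_length_eq_dist x v
  obtain ⟨pyu, hyu⟩ := hG.exists_walk_length_eq_dist y u
  set F : Set V := {z | z ∈ pxu.support} ∪ {z | z ∈ pyv.support} ∪ {z | z ∈ pxv.support} ∪
    {z | z ∈ pyu.support}
  have hF : F.Finite := by simp [F]
  obtain ⟨Q, hQ, hsep⟩ := hH.exists_isClique_separates hF (isClique_singleton x)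
    (isClique_singleton y) (isClique_singleton u) (isClique_singleton v)
  have hQk : ∀ p ∈ Q, ∀ q ∈ Q, G.dist p q ≤ k := fun p hp q hq => by
    rcases eq_or_ne p q with rfl | hpq
    exacts [by simp, hdist p q (hQ hp hq hpq)]
  rcases hsep with ⟨h₁, h₂⟩ | ⟨h₁, h₂⟩
  · have := h₁.dist_add_dist_le hG hle hQk hxu hyv (fun z hz => by simp [F, hz])
      (fun z hz => by simp [F, hz]) h₂
    omega
  · have := h₁.dist_add_dist_le hG hle hQk hxv hyu (fun z hz => by simp [F, hz])
      (fun z hz => by simp [F, hz]) h₂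
    rw [dist_comm (u := u)]
    omega

/-- A connected graph of tree-length at most `k` (`k ≥ 1`) is `k`-hyperbolic. -/
theorem hyperbolic_of_treeLength {V : Type*} (G : SimpleGraph V) (hG : G.Connected)
    (k : ℕ) (hk : 0 < k) (H : SimpleGraph V) (hH : IsChordalGraph H) (hle : G ≤ H)
    (hdist : ∀ u v : V, H.Adj u v → G.dist u v ≤ k) :
    ∀ x y u v : V,
      G.dist x y + G.dist u v ≤
        max (G.dist x u + G.dist y v) (G.dist x v + G.dist y u) + 2 * k :=
  hyperbolic_of_treeLength_general G hG k H hH hle hdist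
end

section
/- Let G be a connected simple graph, t a nonnegative integer, and suppose G has a distance t-approximating tree: a tree T on the same vertex set V(G) such that |d_G(u,v) − d_T(u,v)| ≤ t for all u, v ∈ V(G). Then G is 2t-hyperbolic: for all vertices x, y, u, v, d_G(x,y) + d_G(u,v) ≤ max(d_G(x,u) + d_G(y,v), d_G(x,v) + d_G(y,u)) + 4t. -/
/-!
Trees satisfy the four-point condition exactly. Geodesics in a tree are its unique paths, so
two vertices lying metrically between `x` and `y` are comparable along the path from `x` to `y`,
and every triple has a median. With `m₁` the median of `x, y, u` and `m₂` that of `x, y, v`,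
ordering `m₁, m₂` along the path from `x` to `y` gives the four-point inequality. Passing from
`d_T` to `d_G` changes each of the six distances by at most `t`, whence the error `4t`.
-/

namespace SimpleGraph

variable {V : Type*} {G : SimpleGraph V}

lemma IsAcyclic.length_eq_dist_of_isPath (hG : G.IsAcyclic) {u v : V} {p : G.Walk u v}
    (hp : p.IsPath) : p.length = G.dist u v := by
  obtain ⟨q, hq, hql⟩ := p.reachable.exists_path_of_dist
  rw [← hql, Subtype.mk.inj ((hG.subsingleton_path u v).elim ⟨p, hp⟩ ⟨q, hq⟩)]

lemma IsAcyclic.dist_add_dist_of_mem_support (hG : G.IsAcyclic) {u v w : V} {p : G.Walk u v}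
    (hp : p.IsPath) (hw : w ∈ p.support) : G.dist u w + G.dist w v = G.dist u v := by
  obtain ⟨p₀, p₁, hp₀, hp₁, rfl⟩ := hp.mem_support_iff_exists_append.mp hw
  rw [← hG.length_eq_dist_of_isPath hp₀, ← hG.length_eq_dist_of_isPath hp₁,
    ← hG.length_eq_dist_of_isPath hp, Walk.length_append]

lemma IsTree.mem_support_of_dist_add_dist (hG : G.IsTree) {u v w : V} {p : G.Walk u v}
    (hp : p.IsPath) (h : G.dist u w + G.dist w v = G.dist u v) : w ∈ p.support := by
  obtain ⟨q₀, hq₀⟩ := hG.connected.exists_walk_length_eq_dist u w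
  obtain ⟨q₁, hq₁⟩ := hG.connected.exists_walk_length_eq_dist w v
  have hq : (q₀.append q₁).IsPath :=
    Walk.isPath_of_length_eq_dist _ (by rw [Walk.length_append, hq₀, hq₁, h])
  rw [← Subtype.mk.inj ((hG.isAcyclic.subsingleton_path u v).elim ⟨_, hq⟩ ⟨p, hp⟩)]
  exact (Walk.mem_support_append_iff _ _).2 (.inl q₀.end_mem_support)

lemma IsTree.dist_add_dist_eq_or_of_dist_add_dist_eq (hG : G.IsTree) {x y m₁ m₂ : V}
    (h₁ : G.dist x m₁ + G.dist m₁ y = G.dist x y)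
    (h₂ : G.dist x m₂ + G.dist m₂ y = G.dist x y) :
    G.dist x m₁ + G.dist m₁ m₂ = G.dist x m₂ ∨
      G.dist x m₂ + G.dist m₂ m₁ = G.dist x m₁ := by
  obtain ⟨p, hp, -⟩ := hG.connected.exists_path_of_dist x y
  obtain ⟨p₀, p₁, hp₀, hp₁, rfl⟩ :=
    hp.mem_support_iff_exists_append.mp (hG.mem_support_of_dist_add_dist hp h₁)
  rcases (Walk.mem_support_append_iff _ _).1 (hG.mem_support_of_dist_add_dist hp h₂) with h | h
  · exact .inr (hG.isAcyclic.dist_add_dist_of_mem_support hp₀ h)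
  · have := hG.isAcyclic.dist_add_dist_of_mem_support hp₁ h
    omega

lemma Connected.exists_adj_dist_eq_of_dist_eq_succ (hG : G.Connected) {a b : V} {n : ℕ}
    (h : G.dist a b = n + 1) : ∃ a', G.Adj a a' ∧ G.dist a' b = n := by
  obtain ⟨p, hp⟩ := hG.exists_walk_length_eq_dist a b
  cases p with
  | nil => simp_all
  | @cons _ a' _ hadj q =>
    refine ⟨_, hadj, le_antisymm ?_ ?_⟩
    · have := dist_le q
      simp_all
    · have := hG.dist_triangle (u := a) (w := b) (v := a')
      have := dist_eq_one_iff_adj.2 hadj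
      omega

lemma IsTree.exists_median (hG : G.IsTree) (a b c : V) :
    ∃ m, G.dist a m + G.dist m b = G.dist a b ∧ G.dist a m + G.dist m c = G.dist a c ∧
      G.dist b m + G.dist m c = G.dist b c := by
  have tri (x y z : V) : G.dist x z ≤ G.dist x y + G.dist y z := hG.connected.dist_triangle
  induction hab : G.dist a b generalizing a with
  | zero =>
    obtain rfl := hG.connected.dist_eq_zero_iff.1 hab
    exact ⟨a, by simp⟩
  | succ n ih =>
    obtain ⟨a', hadj, ha'b⟩ := hG.connected.exists_adj_dist_eq_of_dist_eq_succ hab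
    obtain ⟨m, ha'mb, ha'mc, hbmc⟩ := ih a' ha'b
    have haa' : G.dist a a' = 1 := dist_eq_one_iff_adj.2 hadj
    have ha'a : G.dist a' a = 1 := dist_eq_one_iff_adj.2 hadj.symm
    have := tri a m b
    rcases hG.dist_eq_dist_add_one_of_adj c hadj.symm with hc | hc <;>
      rw [dist_comm (u := c), dist_comm (u := c)] at hc
    · -- `a` and `m` both lie between `a'` and `c`, so they are comparable
      rcases hG.dist_add_dist_eq_or_of_dist_add_dist_eq (m₁ := a) (by omega) ha'mc with h | h
      · omega
      · refine ⟨a, by simp [hab], by simp, ?_⟩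
        have := tri b m a; have := tri a' m c; have := tri b a c
        omega
    · have := tri a a' m; have := tri a m c
      exact ⟨m, by omega, by omega, hbmc⟩

lemma IsTree.dist_add_dist_le_max (hG : G.IsTree) (x y u v : V) :
    G.dist x y + G.dist u v ≤ max (G.dist x u + G.dist y v) (G.dist x v + G.dist y u) := by
  obtain ⟨m₁, hxy₁, hxu, hyu⟩ := hG.exists_median x y u
  obtain ⟨m₂, hxy₂, hxv, hyv⟩ := hG.exists_median x y v
  have tri (x y z : V) : G.dist x z ≤ G.dist x y + G.dist y z := hG.connected.dist_triangle
  have := tri u m₁ m₂; have := tri u m₂ v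
  have comm (x y : V) : G.dist x y = G.dist y x := dist_comm
  have := comm u m₁; have := comm m₁ m₂; have := comm y m₁; have := comm y m₂
  rcases hG.dist_add_dist_eq_or_of_dist_add_dist_eq hxy₁ hxy₂ with h | h <;> omega

end SimpleGraph

theorem hyperbolic_of_approximating_tree_general {V : Type*} (G : SimpleGraph V)
    (t : ℕ) (T : SimpleGraph V) (hT : T.IsTree)
    (happrox : ∀ u v : V, G.dist u v ≤ T.dist u v + t ∧ T.dist u v ≤ G.dist u v + t) :
    ∀ x y u v : V,
      G.dist x y + G.dist u v ≤
        max (G.dist x u + G.dist y v) (G.dist x v + G.dist y u) + 4 * t := by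
  intro x y u v
  have := hT.dist_add_dist_le_max x y u v
  have := happrox x y; have := happrox u v
  have := happrox x u; have := happrox y v
  have := happrox x v; have := happrox y u
  omega

/-- If a connected graph `G` has a distance `t`-approximating tree `T` (a tree on
the same vertex set with `|d_G(u,v) - d_T(u,v)| ≤ t` for all `u, v`), then `G` is
`2t`-hyperbolic. -/
theorem hyperbolic_of_approximating_tree {V : Type*} (G : SimpleGraph V)
    (hG : G.Connected) (t : ℕ) (T : SimpleGraph V) (hT : T.IsTree)
    (happrox : ∀ u v : V, G.dist u v ≤ T.dist u v + t ∧ T.dist u v ≤ G.dist u v + t) :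
    ∀ x y u v : V,
      G.dist x y + G.dist u v ≤
        max (G.dist x u + G.dist y v) (G.dist x v + G.dist y u) + 4 * t :=
  hyperbolic_of_approximating_tree_general G t T hT happrox
end

section
/- Let G be a connected simple graph and let x, y, u, v be vertices of G. Then δ_G(x,y,u,v) ≤ min(d(u,v), d(x,y), d(u,x), d(y,v), d(u,y), d(x,v)); equivalently, d(x,y) + d(u,v) ≤ max(d(x,u) + d(y,v), d(x,v) + d(y,u)) + 2·min(d(u,v), d(x,y), d(u,x), d(y,v), d(u,y), d(x,v)). -/
/-- For any vertices `x, y, u, v` of a connected graph,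
`δ(x,y,u,v) ≤ min(d(u,v), d(x,y), d(u,x), d(y,v), d(u,y), d(x,v))`. -/
theorem delta_le_min_dist {V : Type*} (G : SimpleGraph V) (hG : G.Connected)
    (x y u v : V) :
    G.dist x y + G.dist u v ≤
      max (G.dist x u + G.dist y v) (G.dist x v + G.dist y u) +
        2 * min (G.dist u v) (min (G.dist x y) (min (G.dist u x)
          (min (G.dist y v) (min (G.dist u y) (G.dist x v))))) := by
  have t : ∀ a b c : V, G.dist a c ≤ G.dist a b + G.dist b c :=
    fun a b c => hG.dist_triangle
  have h1 := t x u y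
  have h2 := t x v y
  have h3 := t u x v
  have h4 := t u y v
  have c1 : G.dist u x = G.dist x u := G.dist_comm ..
  have c2 : G.dist v y = G.dist y v := G.dist_comm ..
  have c3 : G.dist u y = G.dist y u := G.dist_comm ..
  have c4 : G.dist v x = G.dist x v := G.dist_comm ..
  omega
end

section
/- Let G be a connected cograph. Then G is 1-hyperbolic: for all vertices x, y, u, v, d(x,y) + d(u,v) ≤ max(d(x,u) + d(y,v), d(x,v) + d(y,u)) + 2. Moreover, G has hyperbolicity exactly 1 (some quadruple attains the bound +2) if and only if the 4-cycle C₄ embeds isometrically into G. -/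
open SimpleGraph

private lemma walk_dist_bounds {V : Type*} {G : SimpleGraph V} (hG : G.Connected) :
    ∀ {x y : V} (p : G.Walk x y) (i : ℕ),
      G.dist x (p.getVert i) ≤ i ∧ G.dist (p.getVert i) y ≤ p.length - i := by
  intro x y p
  induction p with
  | nil =>
    intro i
    simp only [SimpleGraph.Walk.getVert]
    simp [SimpleGraph.dist_self]
  | @cons a b c h q ih =>
    intro i
    cases i with
    | zero =>
      refine ⟨by simp [SimpleGraph.dist_self], ?_⟩
      simpa using SimpleGraph.dist_le (SimpleGraph.Walk.cons h q)
    | succ n =>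
      obtain ⟨h1, h2⟩ := ih n
      constructor
      · calc G.dist a ((SimpleGraph.Walk.cons h q).getVert (n+1))
            ≤ G.dist a b + G.dist b ((SimpleGraph.Walk.cons h q).getVert (n+1)) :=
              hG.dist_triangle
          _ ≤ 1 + n := by
              rw [SimpleGraph.Walk.getVert_cons_succ]
              exact Nat.add_le_add (le_of_eq (SimpleGraph.dist_eq_one_iff_adj.mpr h)) h1
          _ = n + 1 := by omega
      · rw [SimpleGraph.Walk.getVert_cons_succ, SimpleGraph.Walk.length_cons]
        omega

/-- A cograph is a graph with no induced path on `4` vertices. -/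
def IsCograph {V : Type*} (G : SimpleGraph V) : Prop :=
  IsEmpty (SimpleGraph.pathGraph 4 ↪g G)

private lemma cograph_diam {V : Type*} {G : SimpleGraph V} (hG : G.Connected)
    (hco : IsCograph G) (x y : V) : G.dist x y ≤ 2 := by
  by_contra hc
  push_neg at hc
  obtain ⟨p, hp⟩ := hG.exists_walk_length_eq_dist x y
  have hL : 3 ≤ p.length := by omega
  set b := p.getVert 1 with hb
  set c := p.getVert 2 with hcv
  set d := p.getVert 3 with hd
  have a01 : G.Adj x b := by
    have := p.adj_getVert_succ (by omega : 0 < p.length)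
    simpa [p.getVert_zero] using this
  have a12 : G.Adj b c := p.adj_getVert_succ (by omega : 1 < p.length)
  have a23 : G.Adj c d := p.adj_getVert_succ (by omega : 2 < p.length)
  have b1 := walk_dist_bounds hG p 1
  have b2 := walk_dist_bounds hG p 2
  have b3 := walk_dist_bounds hG p 3
  rw [← hb] at b1; rw [← hcv] at b2; rw [← hd] at b3
  -- triangle bounds
  have t2 : G.dist x y ≤ G.dist x c + G.dist c y := hG.dist_triangle
  have t3 : G.dist x y ≤ G.dist x d + G.dist d y := hG.dist_triangle
  have t13 : G.dist x y ≤ G.dist x b + (G.dist b d + G.dist d y) :=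
    le_trans hG.dist_triangle (by exact Nat.add_le_add_left hG.dist_triangle _)
  have hxc : ¬ G.Adj x c := fun h => by
    have := SimpleGraph.dist_eq_one_iff_adj.mpr h; omega
  have hxd : ¬ G.Adj x d := fun h => by
    have := SimpleGraph.dist_eq_one_iff_adj.mpr h; omega
  have hbd : ¬ G.Adj b d := fun h => by
    have := SimpleGraph.dist_eq_one_iff_adj.mpr h; omega
  have nxc : x ≠ c := fun h => by
    have h0 : G.dist x c = 0 := by rw [h]; exact SimpleGraph.dist_self
    omega
  have nxd : x ≠ d := fun h => by
    have h0 : G.dist x d = 0 := by rw [h]; exact SimpleGraph.dist_self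
    omega
  have nbd : b ≠ d := fun h => by
    have h0 : G.dist b d = 0 := by rw [h]; exact SimpleGraph.dist_self
    omega
  -- build the embedding
  let f : Fin 4 → V := ![x, b, c, d]
  have hinj : Function.Injective f := by
    intro i j hij
    fin_cases i <;> fin_cases j <;>
      simp_all [f, a01.ne, a12.ne, a23.ne, nxc, nxd, nbd] <;>
      first
      | rfl
      | (exfalso; first
          | exact a01.ne hij | exact a12.ne hij | exact a23.ne hij
          | exact nxc hij | exact nxd hij | exact nbd hij
          | exact a01.ne hij.symm | exact a12.ne hij.symm | exact a23.ne hij.symm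
          | exact nxc hij.symm | exact nxd hij.symm | exact nbd hij.symm)
  refine hco.false ⟨⟨f, hinj⟩, ?_⟩
  intro i j
  fin_cases i <;> fin_cases j <;>
    simp [f, SimpleGraph.pathGraph_adj, a01, a12, a23, a01.symm, a12.symm, a23.symm,
      hxc, hxd, hbd, fun h => hxc (G.adj_symm h), fun h => hxd (G.adj_symm h),
      fun h => hbd (G.adj_symm h), G.irrefl,
      (by decide : ((3:Fin 4):ℕ) = 3)] <;>
    first
    | exact fun h => hxc h.symm
    | exact fun h => hxd h.symm
    | exact fun h => hbd h.symm

private lemma cyc4_dist_one {i j : Fin 4} (h : (SimpleGraph.cycleGraph 4).Adj i j) :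
    (SimpleGraph.cycleGraph 4).dist i j = 1 :=
  SimpleGraph.dist_eq_one_iff_adj.mpr h

private lemma cyc4_dist_two {i j k : Fin 4} (hik : (SimpleGraph.cycleGraph 4).Adj i k)
    (hkj : (SimpleGraph.cycleGraph 4).Adj k j) (hij : ¬ (SimpleGraph.cycleGraph 4).Adj i j)
    (hne : i ≠ j) : (SimpleGraph.cycleGraph 4).dist i j = 2 := by
  have hle : (SimpleGraph.cycleGraph 4).dist i j ≤ 2 := by
    have := SimpleGraph.dist_le (SimpleGraph.Walk.cons hik (SimpleGraph.Walk.cons hkj SimpleGraph.Walk.nil))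
    simpa using this
  have h0 : (SimpleGraph.cycleGraph 4).dist i j ≠ 0 :=
    SimpleGraph.dist_ne_zero_iff_ne_and_reachable.mpr
      ⟨hne, ⟨SimpleGraph.Walk.cons hik (SimpleGraph.Walk.cons hkj SimpleGraph.Walk.nil)⟩⟩
  have h1 : (SimpleGraph.cycleGraph 4).dist i j ≠ 1 := fun h =>
    hij (SimpleGraph.dist_eq_one_iff_adj.mp h)
  omega


/-- `H` embeds isometrically into `G`: there is a vertex map preserving all distances. -/
def IsometricCopy {α β : Type*} (H : SimpleGraph α) (G : SimpleGraph β) : Prop :=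
  ∃ f : α → β, ∀ h h' : α, G.dist (f h) (f h') = H.dist h h'

/-- Every connected cograph is `1`-hyperbolic, and it has hyperbolicity exactly `1`
if and only if `C₄` embeds isometrically into it. -/
theorem cograph_one_hyperbolic {V : Type*} (G : SimpleGraph V)
    (hG : G.Connected) (hco : IsCograph G) :
    (∀ x y u v : V,
      G.dist x y + G.dist u v ≤
        max (G.dist x u + G.dist y v) (G.dist x v + G.dist y u) + 2) ∧
    ((∃ x y u v : V,
        G.dist x y + G.dist u v =
          max (G.dist x u + G.dist y v) (G.dist x v + G.dist y u) + 2) ↔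
      IsometricCopy (SimpleGraph.cycleGraph 4) G) := by
  have hd2 : ∀ a b : V, G.dist a b ≤ 2 := cograph_diam hG hco
  have c01 : (SimpleGraph.cycleGraph 4).dist 0 1 = 1 := cyc4_dist_one (by decide)
  have c12 : (SimpleGraph.cycleGraph 4).dist 1 2 = 1 := cyc4_dist_one (by decide)
  have c23 : (SimpleGraph.cycleGraph 4).dist 2 3 = 1 := cyc4_dist_one (by decide)
  have c03 : (SimpleGraph.cycleGraph 4).dist 0 3 = 1 := cyc4_dist_one (by decide)
  have c02 : (SimpleGraph.cycleGraph 4).dist 0 2 = 2 :=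
    cyc4_dist_two (k := 1) (by decide) (by decide) (by decide) (by decide)
  have c13 : (SimpleGraph.cycleGraph 4).dist 1 3 = 2 :=
    cyc4_dist_two (k := 2) (by decide) (by decide) (by decide) (by decide)
  have c10 : (SimpleGraph.cycleGraph 4).dist 1 0 = 1 := by rw [SimpleGraph.dist_comm]; exact c01
  have c21 : (SimpleGraph.cycleGraph 4).dist 2 1 = 1 := by rw [SimpleGraph.dist_comm]; exact c12
  have c32 : (SimpleGraph.cycleGraph 4).dist 3 2 = 1 := by rw [SimpleGraph.dist_comm]; exact c23
  have c30 : (SimpleGraph.cycleGraph 4).dist 3 0 = 1 := by rw [SimpleGraph.dist_comm]; exact c03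
  have c20 : (SimpleGraph.cycleGraph 4).dist 2 0 = 2 := by rw [SimpleGraph.dist_comm]; exact c02
  have c31 : (SimpleGraph.cycleGraph 4).dist 3 1 = 2 := by rw [SimpleGraph.dist_comm]; exact c13
  constructor
  · intro x y u v
    have t1 : G.dist x y ≤ G.dist x u + G.dist u y := hG.dist_triangle
    have t2 : G.dist x y ≤ G.dist x v + G.dist v y := hG.dist_triangle
    have t3 : G.dist u v ≤ G.dist u x + G.dist x v := hG.dist_triangle
    have t4 : G.dist u v ≤ G.dist u y + G.dist y v := hG.dist_triangle
    have e1 : G.dist u y = G.dist y u := SimpleGraph.dist_comm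
    have e2 : G.dist v y = G.dist y v := SimpleGraph.dist_comm
    have e3 : G.dist u x = G.dist x u := SimpleGraph.dist_comm
    have h1 := hd2 x y; have h2 := hd2 u v; have h3 := hd2 x u
    have h4 := hd2 y v; have h5 := hd2 x v; have h6 := hd2 y u
    rcases max_cases (G.dist x u + G.dist y v) (G.dist x v + G.dist y u) with
      ⟨hm, hle⟩ | ⟨hm, hle⟩ <;> rw [hm] <;> omega
  constructor
  · rintro ⟨x, y, u, v, heq⟩
    have t1 : G.dist x y ≤ G.dist x u + G.dist u y := hG.dist_triangle
    have t2 : G.dist x y ≤ G.dist x v + G.dist v y := hG.dist_triangle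
    have t3 : G.dist u v ≤ G.dist u x + G.dist x v := hG.dist_triangle
    have t4 : G.dist u v ≤ G.dist u y + G.dist y v := hG.dist_triangle
    have e1 : G.dist u y = G.dist y u := SimpleGraph.dist_comm
    have e2 : G.dist v y = G.dist y v := SimpleGraph.dist_comm
    have e3 : G.dist u x = G.dist x u := SimpleGraph.dist_comm
    have h1 := hd2 x y; have h2 := hd2 u v; have h3 := hd2 x u
    have h4 := hd2 y v; have h5 := hd2 x v; have h6 := hd2 y u
    have key : G.dist x y = 2 ∧ G.dist u v = 2 ∧ G.dist x u = 1 ∧ G.dist y v = 1 ∧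
        G.dist x v = 1 ∧ G.dist y u = 1 := by
      rcases max_cases (G.dist x u + G.dist y v) (G.dist x v + G.dist y u) with
        ⟨hm, hle⟩ | ⟨hm, hle⟩ <;> rw [hm] at heq <;> omega
    obtain ⟨dxy, duv, dxu, dyv, dxv, dyu⟩ := key
    have dyx : G.dist y x = 2 := by rw [SimpleGraph.dist_comm]; exact dxy
    have dvu : G.dist v u = 2 := by rw [SimpleGraph.dist_comm]; exact duv
    have dux : G.dist u x = 1 := by rw [SimpleGraph.dist_comm]; exact dxu
    have dvy : G.dist v y = 1 := by rw [SimpleGraph.dist_comm]; exact dyv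
    have dvx : G.dist v x = 1 := by rw [SimpleGraph.dist_comm]; exact dxv
    have duy : G.dist u y = 1 := by rw [SimpleGraph.dist_comm]; exact dyu
    refine ⟨![x, u, y, v], ?_⟩
    intro h h'
    fin_cases h <;> fin_cases h' <;>
      simp [SimpleGraph.dist_self, c01, c12, c23, c03, c02, c13, c10, c21, c32, c30, c20, c31,
        dxy, duv, dxu, dyv, dxv, dyu, dyx, dvu, dux, dvy, dvx, duy]
  · rintro ⟨f, hf⟩
    refine ⟨f 0, f 2, f 1, f 3, ?_⟩
    rw [hf 0 2, hf 1 3, hf 0 1, hf 2 3, hf 0 3, hf 2 1, c02, c13, c01, c23, c03, c21]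
    simp
end

section
/- Let G be a connected simple graph and let x, y, u, v, b be vertices such that b lies on a geodesic from x to v with b ≠ x (i.e., d(x,b) + d(b,v) = d(x,v) and d(x,b) ≥ 1), d(u,b) = 1, and d(x,y) + d(u,v) ≥ d(x,v) + d(y,u) + 2. Then d(x,u) = d(x,b) + 1; in particular, the neighbor b₁ of x on this geodesic satisfies d(b₁,u) < d(x,u). -/
/-- If `b` lies on a geodesic from `x` to `v` with `b ≠ x`, `d(u,b) = 1`, and
`d(x,y) + d(u,v) ≥ d(x,v) + d(y,u) + 2`, then `d(x,u) = d(x,b) + 1`; in particular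
any neighbor `b₁` of `x` on this geodesic satisfies `d(b₁,u) < d(x,u)`. -/
theorem geodesic_neighbor_closer {V : Type*} (G : SimpleGraph V) (hG : G.Connected)
    (x y u v b : V)
    (hb : G.dist x b + G.dist b v = G.dist x v) (hxb : 1 ≤ G.dist x b)
    (hub : G.dist u b = 1)
    (hineq : G.dist x v + G.dist y u + 2 ≤ G.dist x y + G.dist u v) :
    G.dist x u = G.dist x b + 1 ∧
    ∀ b₁ : V, G.dist x b₁ = 1 → G.dist x b₁ + G.dist b₁ b = G.dist x b →
      G.dist b₁ u < G.dist x u := by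
  have t1 : G.dist x u ≤ G.dist x b + G.dist b u := hG.dist_triangle
  have t2 : G.dist u v ≤ G.dist u b + G.dist b v := hG.dist_triangle
  have t3 : G.dist x y ≤ G.dist x u + G.dist u y := hG.dist_triangle
  have hbu : G.dist b u = 1 := by rw [SimpleGraph.dist_comm]; exact hub
  have hyu : G.dist y u = G.dist u y := SimpleGraph.dist_comm ..
  have hmain : G.dist x u = G.dist x b + 1 := by omega
  refine ⟨hmain, fun b₁ h1 h2 => ?_⟩
  have t4 : G.dist b₁ u ≤ G.dist b₁ b + G.dist b u := hG.dist_triangle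
  omega
end

section
/- Let G be a connected simple graph and m a natural number such that for all vertices p, q, r, s: d(p,q) + d(r,s) ≤ max(d(p,r) + d(q,s), d(p,s) + d(q,r)) + m. Suppose x, y, u, v are vertices satisfying d(x,y) + d(u,v) = max(d(x,u) + d(y,v), d(x,v) + d(y,u)) + m, and that the sum d(x,y) + d(u,v) is minimal among all quadruples satisfying this equality (i.e., for all x', y', u', v' with d(x',y') + d(u',v') = max(d(x',u') + d(y',v'), d(x',v') + d(y',u')) + m one has d(x,y) + d(u,v) ≤ d(x',y') + d(u',v')). If a is a vertex with d(x,a) = 1 and d(a,u) + 1 = d(x,u) (a neighbor of x on a geodesic from x to u), then d(a,v) ≥ d(x,v). -/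
/-- Suppose the quadruple `(x,y,u,v)` attains the hyperbolicity `m = 2δ*(G)` of `G`
with `d(x,y) + d(u,v)` minimal among all attaining quadruples. If `a` is a neighbor
of `x` on a geodesic from `x` to `u`, then `d(a,v) ≥ d(x,v)`. -/
theorem extremal_quadruple_neighbor {V : Type*} (G : SimpleGraph V) (hG : G.Connected)
    (m : ℕ)
    (hhyp : ∀ p q r s : V,
      G.dist p q + G.dist r s ≤
        max (G.dist p r + G.dist q s) (G.dist p s + G.dist q r) + m)
    (x y u v : V)
    (heq : G.dist x y + G.dist u v =
      max (G.dist x u + G.dist y v) (G.dist x v + G.dist y u) + m)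
    (hmin : ∀ x' y' u' v' : V,
      G.dist x' y' + G.dist u' v' =
        max (G.dist x' u' + G.dist y' v') (G.dist x' v' + G.dist y' u') + m →
      G.dist x y + G.dist u v ≤ G.dist x' y' + G.dist u' v')
    (a : V) (hxa : G.dist x a = 1) (hau : G.dist a u + 1 = G.dist x u) :
    G.dist x v ≤ G.dist a v := by
  by_contra hcon
  push_neg at hcon
  have dax : G.dist a x = 1 := by rw [SimpleGraph.dist_comm]; exact hxa
  have t1 : G.dist x v ≤ G.dist x a + G.dist a v := hG.dist_triangle
  have hav : G.dist a v + 1 = G.dist x v := by omega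
  have t2 : G.dist x y ≤ G.dist x a + G.dist a y := hG.dist_triangle
  have t3 : G.dist a y ≤ G.dist a x + G.dist x y := hG.dist_triangle
  have hk := hhyp a y u v
  have hmaxeq : max (G.dist x u + G.dist y v) (G.dist x v + G.dist y u)
      = max (G.dist a u + G.dist y v) (G.dist a v + G.dist y u) + 1 := by
    rw [← hau, ← hav]
    have h' : ∀ p q : ℕ, p + 1 + q = (p + q) + 1 := by omega
    rw [h', h', Nat.add_max_add_right]
  rw [hmaxeq] at heq
  set M := max (G.dist a u + G.dist y v) (G.dist a v + G.dist y u) with hM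
  have heq' : G.dist a y + G.dist u v = M + m := by omega
  have := hmin a y u v heq'
  omega
end
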